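/- arXiv:1208.4435 — 5 statements merged into one kernel-verified Lean document; each statement's English description precedes it below -/
import Mathlib

section
/- Setting q = r/gcd(m,r) and d = m/gcd(m,r), every element of ℤ/(dr)ℤ can be written uniquely in the form aq + bd with 0 ≤ a < d and 0 ≤ b < r. Consequently, every (dr)-th root of unity can be written uniquely as ζ^a ω^b with 0 ≤ a < d, 0 ≤ b < r, where ζ is a primitive m-th root of unity and ω is a primitive r-th root of unity whose product generates μ_{dr} appropriately. -/
/-- Set `g = gcd(m,r)`, `q = r/g` and `d = m/g`.  Every element of
`ℤ/(dr)ℤ` can be written uniquely in the form `a·q + b·d` with `0 ≤ a < d` and `0 ≤ b < r`.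
Consequently, letting `ξ` be a primitive `(dr)`-th root of unity, `ζ := ξ^q` (a primitive
`m`-th root of unity) and `ω := ξ^d` (a primitive `r`-th root of unity), every `(dr)`-th
root of unity can be written uniquely as `ζ^a ω^b` with `0 ≤ a < d`, `0 ≤ b < r`. -/
theorem unique_rep_zmod_and_roots (m r : ℕ) (hm : 0 < m) (hr : 0 < r) :
    (∀ x : ZMod ((m / Nat.gcd m r) * r), ∃! ab : Fin (m / Nat.gcd m r) × Fin r,
        x = (ab.1 : ZMod ((m / Nat.gcd m r) * r)) * (r / Nat.gcd m r : ℕ) +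
            (ab.2 : ZMod ((m / Nat.gcd m r) * r)) * (m / Nat.gcd m r : ℕ)) ∧
    ∀ ξ : ℂ, IsPrimitiveRoot ξ ((m / Nat.gcd m r) * r) →
      ∀ z : ℂ, z ^ ((m / Nat.gcd m r) * r) = 1 →
        ∃! ab : Fin (m / Nat.gcd m r) × Fin r,
          z = (ξ ^ (r / Nat.gcd m r)) ^ (ab.1 : ℕ) * (ξ ^ (m / Nat.gcd m r)) ^ (ab.2 : ℕ) := by
  set g := Nat.gcd m r with hg
  set d := m / g with hd
  set q := r / g with hq
  have hg0 : 0 < g := Nat.gcd_pos_of_pos_left r hm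
  have hd0 : 0 < d := Nat.div_pos (Nat.le_of_dvd hm (Nat.gcd_dvd_left m r)) hg0
  have hdr : 0 < d * r := Nat.mul_pos hd0 hr
  haveI : NeZero (d * r) := ⟨hdr.ne'⟩
  have hco : Nat.Coprime d q := Nat.coprime_div_gcd_div_gcd hg0
  -- key modular arithmetic fact
  have key : ∀ (a a' : Fin d) (b b' : Fin r),
      a.1 * q + b.1 * d ≡ a'.1 * q + b'.1 * d [MOD d * r] → a = a' ∧ b = b' := by
    intro a a' b b' h
    have hdmod : a.1 * q + b.1 * d ≡ a'.1 * q + b'.1 * d [MOD d] :=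
      h.of_mul_right r
    have ha : a.1 * q ≡ a'.1 * q [MOD d] := by
      have h1 : a.1 * q + b.1 * d ≡ a.1 * q + 0 [MOD d] :=
        Nat.ModEq.add_left _ (Nat.modEq_zero_iff_dvd.2 ⟨b.1, mul_comm _ _⟩)
      have h2 : a'.1 * q + b'.1 * d ≡ a'.1 * q + 0 [MOD d] :=
        Nat.ModEq.add_left _ (Nat.modEq_zero_iff_dvd.2 ⟨b'.1, mul_comm _ _⟩)
      simpa using h1.symm.trans (hdmod.trans h2)
    have haa : a.1 ≡ a'.1 [MOD d] := Nat.ModEq.cancel_right_of_coprime hco ha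
    have haeq : a = a' := by
      apply Fin.ext
      rwa [Nat.ModEq, Nat.mod_eq_of_lt a.2, Nat.mod_eq_of_lt a'.2] at haa
    refine ⟨haeq, ?_⟩
    subst haeq
    have hb : b.1 * d ≡ b'.1 * d [MOD r * d] := by
      have := Nat.ModEq.add_left_cancel' (a.1 * q) h
      rwa [mul_comm d r] at this
    have hbb : b.1 ≡ b'.1 [MOD r] := Nat.ModEq.mul_right_cancel' hd0.ne' hb
    apply Fin.ext
    rwa [Nat.ModEq, Nat.mod_eq_of_lt b.2, Nat.mod_eq_of_lt b'.2] at hbb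
  -- the map and its bijectivity
  set f : Fin d × Fin r → ZMod (d * r) := fun ab =>
    (ab.1 : ZMod (d * r)) * (q : ℕ) + (ab.2 : ZMod (d * r)) * (d : ℕ) with hf
  have hcast : ∀ ab : Fin d × Fin r, f ab = ((ab.1.1 * q + ab.2.1 * d : ℕ) : ZMod (d * r)) := by
    intro ab; push_cast [hf]; ring
  have hinj : Function.Injective f := by
    intro ab ab' h
    rw [hcast, hcast, ZMod.natCast_eq_natCast_iff] at h
    obtain ⟨h1, h2⟩ := key _ _ _ _ h
    exact Prod.ext h1 h2
  have hbij : Function.Bijective f := by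
    rw [Fintype.bijective_iff_injective_and_card]
    refine ⟨hinj, by simp [ZMod.card]⟩
  have part1 : ∀ x : ZMod (d * r), ∃! ab : Fin d × Fin r, x = f ab := by
    intro x
    obtain ⟨ab, hab⟩ := hbij.surjective x
    exact ⟨ab, hab.symm, fun ab' hab' => hinj (hab'.symm.trans hab.symm)⟩
  refine ⟨part1, ?_⟩
  intro ξ hξ z hz
  obtain ⟨k, hk, hkz⟩ := hξ.eq_pow_of_pow_eq_one hz
  obtain ⟨ab, hab, huniq⟩ := part1 (k : ZMod (d * r))
  have hpow : ∀ ab : Fin d × Fin r,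
      (ξ ^ q) ^ (ab.1 : ℕ) * (ξ ^ d) ^ (ab.2 : ℕ) = ξ ^ (ab.1.1 * q + ab.2.1 * d) := by
    intro ab; rw [pow_add, ← pow_mul, ← pow_mul, mul_comm q, mul_comm d]
  have hpe : ∀ i j : ℕ, ξ ^ i = ξ ^ j ↔ i ≡ j [MOD d * r] := by
    intro i j
    have hne : ξ ≠ 0 := hξ.ne_zero hdr.ne'
    calc ξ ^ i = ξ ^ j ↔ ξ ^ ((i : ℤ) - (j : ℤ)) = 1 := by
          rw [zpow_sub₀ hne, zpow_natCast, zpow_natCast,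
            div_eq_one_iff_eq (pow_ne_zero _ hne)]
      _ ↔ ((d * r : ℕ) : ℤ) ∣ (i : ℤ) - (j : ℤ) := hξ.zpow_eq_one_iff_dvd _
      _ ↔ i ≡ j [MOD d * r] := by rw [Nat.modEq_iff_dvd, dvd_sub_comm]
  have hmodeq : ∀ ab : Fin d × Fin r,
      ((k : ZMod (d * r)) = f ab) ↔ ξ ^ k = (ξ ^ q) ^ (ab.1 : ℕ) * (ξ ^ d) ^ (ab.2 : ℕ) := by
    intro ab
    rw [hpow, hcast, ZMod.natCast_eq_natCast_iff]
    exact (hpe _ _).symm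
  refine ⟨ab, ?_, ?_⟩
  · show z = _
    rw [← hkz]
    exact (hmodeq ab).1 hab
  · intro ab' hab'
    exact huniq ab' ((hmodeq ab').2 (by rw [hkz]; exact hab'))
end

section
/- The Möbius function μ(0̂,1̂) of the Dowling lattice Q_n(r) equals (−1)^n (r+1)(2r+1)⋯((n−1)r+1). -/
open Classical in
/-- The Möbius function of a finite poset. -/
noncomputable def mob {α : Type*} [PartialOrder α] [Finite α] (x y : α) : ℤ :=
  letI : Fintype α := Fintype.ofFinite α
  if x = y then 1
  else if x ≤ y then
    - ∑ z : α, if h : x ≤ z ∧ z < y then mob x z else 0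
  else 0
termination_by (Set.Iic y).ncard
decreasing_by
  · refine Set.ncard_lt_ncard ?_ (Set.toFinite _)
    constructor
    · exact fun w hw => le_trans hw h.2.le
    · intro hsub
      exact absurd (lt_of_le_of_lt (hsub (le_refl y)) h.2) (lt_irrefl _)

/-- The reflection arrangement `A_n(r)` in `ℂ^n`, consisting of the hyperplanes
`v_i = ζ v_j` (`1 ≤ i < j ≤ n`, `ζ^r = 1`) and `v_k = 0` (`1 ≤ k ≤ n`). -/
def arrA (n r : ℕ) : Set (Submodule ℂ (Fin n → ℂ)) :=
  {W | (∃ i j : Fin n, ∃ ζ : ℂ, i < j ∧ ζ ^ r = 1 ∧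
          W = LinearMap.ker (LinearMap.proj (R := ℂ) (φ := fun _ : Fin n => ℂ) i -
            ζ • LinearMap.proj j)) ∨
        ∃ k : Fin n, W = LinearMap.ker (LinearMap.proj (R := ℂ) (φ := fun _ : Fin n => ℂ) k)}

/-- The intersection lattice of an arrangement: all intersections of subsets of the
arrangement (including the empty intersection `ℂ^n`). -/
def interLat {n : ℕ} (A : Set (Submodule ℂ (Fin n → ℂ))) : Set (Submodule ℂ (Fin n → ℂ)) :=
  {W | ∃ S ⊆ A, W = sInf S}

/-!
By Rota's cross-cut theorem, `μ(0̂, x)` in the intersection lattice of an arrangement `A` is the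
sum of `(-1)^|S|` over the sets `S ⊆ A` with `⋂ S = x`, so `μ(0̂, 1̂) = χ(0)` for the
characteristic polynomial `χ(t) = ∑_S (-1)^|S| t^(dim ⋂ S)`.

We compute `χ` by a variant of the finite field method that stays in `ℂ`: count the points of
`ℂ^n` whose coordinates lie in `P = {0} ∪ μ_{mr}`. Every flat of `A_n(r)` is cut out by a zero
block and blocks on which `v_i = ζ_i v_j` with `ζ_i^r = 1`; as `μ_r P = P`, it contains exactly
`|P|^dim` such points. Inclusion–exclusion then gives `χ(mr + 1)` as the number of such points
off all hyperplanes: tuples of nonzero coordinates whose `r`-th powers are distinct `m`-th roots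
of unity, `m(m-1)⋯(m-n+1) r^n` of them. Hence `χ(t) = ∏_{i<n} (t - 1 - ir)`.
-/

open Finset
open scoped Classical

section Mobius

variable {α : Type*} [PartialOrder α] [Fintype α]

theorem mob_eq_ite (x y : α) :
    mob x y = if x = y then 1 else if x ≤ y then -∑ z with x ≤ z ∧ z < y, mob x z else 0 := by
  rw [mob, Subsingleton.elim (Fintype.ofFinite α) ‹_›, sum_filter]
  simp only [dite_eq_ite]

theorem sum_filter_le_eq_add_sum_filter_lt {M : Type*} [AddCommMonoid M] (g : α → M) (x : α) :
    ∑ y with y ≤ x, g y = g x + ∑ y with y < x, g y := by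
  have : univ.filter (· ≤ x) = insert x (univ.filter (· < x)) := by
    ext y
    simp [le_iff_lt_or_eq, or_comm]
  rw [this, sum_insert (by simp)]

theorem mob_eq_of_sum_le {b : α} (hb : ∀ x, b ≤ x) {g : α → ℤ}
    (hg : ∀ x, ∑ y with y ≤ x, g y = if x = b then 1 else 0) (x : α) : mob b x = g x := by
  induction x using WellFoundedLT.induction with
  | _ x ih =>
    have hx := hg x
    rw [sum_filter_le_eq_add_sum_filter_lt] at hx
    rw [mob_eq_ite]
    rcases eq_or_ne x b with rfl | hxb
    · have hlt : ∑ y with y < x, g y = 0 :=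
        sum_eq_zero fun y hy => absurd (hb y) (mem_filter.1 hy).2.not_ge
      rw [if_pos rfl, hlt, add_zero] at hx
      rw [if_pos rfl, hx]
    · rw [if_neg (Ne.symm hxb), if_pos (hb x)]
      rw [if_neg hxb] at hx
      rw [sum_congr (filter_congr fun z _ => ⟨fun h => h.2, fun h => ⟨hb z, h⟩⟩)
        fun z hz => ih z (mem_filter.1 hz).2]
      linear_combination -hx

end Mobius

theorem sum_powerset_filter_forall_neg_one_pow {ι : Type*} (A : Finset ι) (q : ι → Prop) :
    ∑ T ∈ A.powerset with ∀ i ∈ T, q i, (-1 : ℤ) ^ #T = if ∀ i ∈ A, ¬q i then 1 else 0 := by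
  have : A.powerset.filter (fun T => ∀ i ∈ T, q i) = (A.filter q).powerset := by
    ext T
    simp only [mem_filter, mem_powerset, subset_iff]
    exact ⟨fun h _ hi => ⟨h.1 hi, h.2 _ hi⟩,
      fun h => ⟨fun _ hi => (h hi).1, fun _ hi => (h hi).2⟩⟩
  rw [this, sum_powerset_neg_one_pow_card]
  exact if_congr filter_eq_empty_iff rfl rfl

theorem card_filter_forall_not_eq_sum_powerset {α ι : Type*} (Ω : Finset α) (A : Finset ι)
    (p : ι → α → Prop) :
    (#{x ∈ Ω | ∀ i ∈ A, ¬p i x} : ℤ) =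
      ∑ T ∈ A.powerset, (-1) ^ #T * (#{x ∈ Ω | ∀ i ∈ T, p i x} : ℤ) := by
  simp only [natCast_card_filter, mul_sum, mul_ite, mul_one, mul_zero]
  rw [sum_comm]
  refine sum_congr rfl fun x _ => ?_
  rw [← sum_filter, sum_powerset_filter_forall_neg_one_pow]

section CrossCut

variable {β : Type*} [CompleteLattice β]

theorem sum_powerset_filter_le_sInf_eq_ite (A : Finset β) (htop : ⊤ ∉ A) (y : β)
    (hy : ∃ S ⊆ (A : Set β), y = sInf S) :
    ∑ S ∈ A.powerset with y ≤ sInf ((S : Finset β) : Set β), (-1 : ℤ) ^ #S =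
      if y = ⊤ then 1 else 0 := by
  simp only [le_sInf_iff, mem_coe]
  rw [sum_powerset_filter_forall_neg_one_pow]
  congr 1
  apply propext
  constructor
  · obtain ⟨S, hSA, rfl⟩ := hy
    intro h
    exact sInf_eq_top.2 fun H hH => absurd (sInf_le hH) (h _ (hSA hH))
  · rintro rfl H hH htopH
    exact htop (top_le_iff.1 htopH ▸ hH)

theorem mob_top_eq_sum_sInf_eq {A : Set β} (hA : A.Finite) (htop : ⊤ ∉ A)
    [Finite ↥{W : β | ∃ S ⊆ A, W = sInf S}] (x : ↥{W : β | ∃ S ⊆ A, W = sInf S}) :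
    mob (OrderDual.toDual (⟨⊤, ∅, Set.empty_subset _, sInf_empty.symm⟩ :
        ↥{W : β | ∃ S ⊆ A, W = sInf S})) (OrderDual.toDual x) =
      ∑ S ∈ hA.toFinset.powerset with sInf ((S : Finset β) : Set β) = x, (-1 : ℤ) ^ #S := by
  set L := ↥{W : β | ∃ S ⊆ A, W = sInf S}
  let : Fintype Lᵒᵈ := Fintype.ofFinite _
  set g : Lᵒᵈ → ℤ := fun y =>
    ∑ S ∈ hA.toFinset.powerset with sInf ((S : Finset β) : Set β) = (OrderDual.ofDual y : L),
      (-1 : ℤ) ^ #S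
  apply mob_eq_of_sum_le (g := g)
  · intro y
    exact show ((OrderDual.ofDual y : L) : β) ≤ ⊤ from le_top
  intro y
  have hcoe : ((hA.toFinset : Finset β) : Set β) = A := hA.coe_toFinset
  have hsum : ∑ z with z ≤ y, g z = ∑ S ∈ hA.toFinset.powerset with
      ((OrderDual.ofDual y : L) : β) ≤ sInf ((S : Finset β) : Set β), (-1 : ℤ) ^ #S := by
    -- each `S` contributes to exactly one fibre, the flat `sInf S`
    simp only [g, sum_filter, ite_sum_zero]
    rw [sum_comm]
    refine sum_congr rfl fun S hS => ?_
    have hSA : ((S : Finset β) : Set β) ⊆ A := hcoe ▸ coe_subset.2 (mem_powerset.1 hS)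
    rw [Fintype.sum_eq_single (OrderDual.toDual ⟨sInf (S : Set β), S, hSA, rfl⟩)]
    · exact if_congr Iff.rfl (if_pos rfl) rfl
    · intro z hz
      have : sInf (S : Set β) ≠ (OrderDual.ofDual z : L) := fun h =>
        hz (OrderDual.ofDual.injective (Subtype.ext h.symm))
      simp [this]
  rw [hsum, sum_powerset_filter_le_sInf_eq_ite _ (by simpa [hcoe] using htop) _
    (by rw [hcoe]; exact (OrderDual.ofDual y).2)]
  have hiff : ((OrderDual.ofDual y : L) : β) = ⊤ ↔
      y = OrderDual.toDual ⟨⊤, ∅, Set.empty_subset _, sInf_empty.symm⟩ :=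
    ⟨fun h => OrderDual.ofDual.injective (Subtype.ext h), fun h => by rw [h]; rfl⟩
  convert if_congr hiff rfl rfl

end CrossCut

section CharPoly

open Polynomial Module

variable {K V : Type*} [Field K] [AddCommGroup V] [Module K V]

noncomputable def charPoly (A : Finset (Submodule K V)) : ℤ[X] :=
  ∑ S ∈ A.powerset,
    C ((-1) ^ #S) * X ^ finrank K ↥(sInf ((S : Finset _) : Set (Submodule K V)))

theorem eval_charPoly (A : Finset (Submodule K V)) (t : ℤ) :
    (charPoly A).eval t = ∑ S ∈ A.powerset,
      (-1) ^ #S * t ^ finrank K ↥(sInf ((S : Finset _) : Set (Submodule K V))) := by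
  simp [charPoly, eval_finsetSum]

theorem eval_zero_charPoly [FiniteDimensional K V] (A : Finset (Submodule K V)) :
    (charPoly A).eval 0 =
      ∑ S ∈ A.powerset with sInf ((S : Finset _) : Set (Submodule K V)) = ⊥, (-1) ^ #S := by
  simp [eval_charPoly, zero_pow_eq, Submodule.finrank_eq_zero, sum_filter]

/-- The finite field method, with an arbitrary finite set of points `Ω` in place of `𝔽_q^n`. -/
theorem eval_charPoly_eq_card (A : Finset (Submodule K V)) (Ω : Finset V) (q : ℕ)
    (hΩ : ∀ S ⊆ A, #{v ∈ Ω | v ∈ sInf (S : Set (Submodule K V))} =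
      q ^ finrank K ↥(sInf (S : Set (Submodule K V)))) :
    (charPoly A).eval (q : ℤ) = #{v ∈ Ω | ∀ H ∈ A, v ∉ H} := by
  rw [eval_charPoly, card_filter_forall_not_eq_sum_powerset]
  refine sum_congr rfl fun S hS => ?_
  rw [← Nat.cast_pow, ← hΩ S (mem_powerset.1 hS)]
  simp [Submodule.mem_sInf]

end CharPoly

section Counting

variable {ι α β : Type*} [Fintype ι] [DecidableEq ι]

theorem card_filter_injective_piFinset (U : Finset β) :
    #{e ∈ Fintype.piFinset fun _ : ι => U | Function.Injective e} =
      (#U).descFactorial (Fintype.card ι) := by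
  rw [← Fintype.card_coe U, ← Fintype.card_embedding_eq, ← card_univ]
  symm
  refine card_nbij (fun e i => (e i : β)) (fun e _ => ?_) (fun e _ e' _ h => ?_) (fun e he => ?_)
  · simp only [mem_coe, mem_filter, Fintype.mem_piFinset]
    exact ⟨fun i => (e i).2, Subtype.val_injective.comp e.injective⟩
  · exact Function.Embedding.ext fun i => Subtype.ext (congrFun h i)
  · simp only [mem_coe, mem_filter, Fintype.mem_piFinset] at he
    exact ⟨⟨fun i => ⟨e i, he.1 i⟩, fun i j h => he.2 (congrArg Subtype.val h)⟩, by simp, rfl⟩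

theorem card_filter_injective_comp (T : Finset α) (U : Finset β) (p : α → β) {k : ℕ}
    (hp : ∀ t ∈ T, p t ∈ U) (hfib : ∀ u ∈ U, #{t ∈ T | p t = u} = k) :
    #{v ∈ Fintype.piFinset fun _ : ι => T | Function.Injective (p ∘ v)} =
      (#U).descFactorial (Fintype.card ι) * k ^ Fintype.card ι := by
  set E := {e ∈ Fintype.piFinset fun _ : ι => U | Function.Injective e}
  set G := {v ∈ Fintype.piFinset fun _ : ι => T | Function.Injective (p ∘ v)}
  have hmaps : (G : Set (ι → α)).MapsTo (fun v => p ∘ v) E := fun v hv => by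
    simp only [G, E, coe_filter, Fintype.mem_piFinset] at hv ⊢
    exact ⟨fun i => hp _ (hv.1 i), hv.2⟩
  have hfiber : ∀ e ∈ E, #{v ∈ G | p ∘ v = e} = k ^ Fintype.card ι := by
    intro e he
    simp only [E, mem_filter, Fintype.mem_piFinset] at he
    have : {v ∈ G | p ∘ v = e} = Fintype.piFinset fun i => {t ∈ T | p t = e i} := by
      ext v
      simp only [G, mem_filter, Fintype.mem_piFinset, funext_iff, Function.comp_apply]
      constructor
      · exact fun h i => ⟨h.1.1 i, h.2 i⟩
      · intro h
        have hpv : p ∘ v = e := funext fun i => (h i).2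
        exact ⟨⟨fun i => (h i).1, hpv ▸ he.2⟩, fun i => (h i).2⟩
    rw [this, Fintype.card_piFinset]
    simp [hfib _ (he.1 _)]
  rw [card_eq_sum_card_fiberwise hmaps, sum_congr rfl hfiber, sum_const, smul_eq_mul,
    card_filter_injective_piFinset]

end Counting

section Hyperplanes

variable {n : ℕ}

theorem mem_ker_proj {k : Fin n} {v : Fin n → ℂ} :
    v ∈ LinearMap.ker (LinearMap.proj (R := ℂ) (φ := fun _ : Fin n => ℂ) k) ↔ v k = 0 :=
  Iff.rfl

theorem mem_ker_proj_sub_smul_proj {i j : Fin n} {ζ : ℂ} {v : Fin n → ℂ} :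
    v ∈ LinearMap.ker
        (LinearMap.proj (R := ℂ) (φ := fun _ : Fin n => ℂ) i - ζ • LinearMap.proj j) ↔
      v i = ζ * v j := by
  simp [sub_eq_zero]

theorem Submodule.inf_eq_inf_of_mem_iff {R M : Type*} [Semiring R] [AddCommMonoid M]
    [Module R M] {W H H' : Submodule R M} (h : ∀ v ∈ W, v ∈ H ↔ v ∈ H') : W ⊓ H = W ⊓ H' :=
  SetLike.ext fun v => by simp only [Submodule.mem_inf]; exact and_congr_right (h v)

end Hyperplanes

/-- A flat of `A_n(r)` in normal form: `rep i = none` puts `i` in the zero block, and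
`rep i = some j` puts `i` in the block with representative `j`, on which `v i = coef i * v j`. -/
structure BlockForm (n r : ℕ) where
  rep : Fin n → Option (Fin n)
  coef : Fin n → ℂ
  rep_rep {i j : Fin n} : rep i = some j → rep j = some j
  coef_rep {j : Fin n} : rep j = some j → coef j = 1
  coef_pow {i j : Fin n} : rep i = some j → coef i ^ r = 1

namespace BlockForm

variable {n r : ℕ} (F : BlockForm n r)

def space : Submodule ℂ (Fin n → ℂ) where
  carrier :=
    {v | (∀ i, F.rep i = none → v i = 0) ∧ ∀ i j, F.rep i = some j → v i = F.coef i * v j}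
  add_mem' {v w} hv hw := ⟨fun i hi => by simp [hv.1 i hi, hw.1 i hi],
    fun i j hij => by simp [hv.2 i j hij, hw.2 i j hij, mul_add]⟩
  zero_mem' := ⟨fun _ _ => rfl, fun _ _ _ => by simp⟩
  smul_mem' a v hv := ⟨fun i hi => by simp [hv.1 i hi],
    fun i j hij => by simp only [Pi.smul_apply, smul_eq_mul, hv.2 i j hij]; ring⟩

def reps : Finset (Fin n) := {j | F.rep j = some j}

def ofReps (w : F.reps → ℂ) : Fin n → ℂ := fun i =>
  (F.rep i).elim 0 fun j => F.coef i * if h : j ∈ F.reps then w ⟨j, h⟩ else 0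

def restrict : F.space →ₗ[ℂ] (F.reps → ℂ) :=
  (LinearMap.funLeft ℂ ℂ ((↑) : F.reps → Fin n)).domRestrict F.space

variable {F}

theorem mem_space {v : Fin n → ℂ} : v ∈ F.space ↔
    (∀ i, F.rep i = none → v i = 0) ∧ ∀ i j, F.rep i = some j → v i = F.coef i * v j :=
  Iff.rfl

theorem apply_eq_zero {v : Fin n → ℂ} (hv : v ∈ F.space) {i : Fin n} (hi : F.rep i = none) :
    v i = 0 :=
  hv.1 i hi

theorem apply_eq_coef_mul {v : Fin n → ℂ} (hv : v ∈ F.space) {i j : Fin n}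
    (hij : F.rep i = some j) : v i = F.coef i * v j :=
  hv.2 i j hij

theorem coef_ne_zero (hr : 0 < r) {i j : Fin n} (hij : F.rep i = some j) : F.coef i ≠ 0 := by
  intro h
  simpa [h, zero_pow hr.ne'] using F.coef_pow hij

theorem mem_reps {j : Fin n} : j ∈ F.reps ↔ F.rep j = some j := by
  simp [reps]

theorem ofReps_of_rep_eq_some (w : F.reps → ℂ) {i j : Fin n} (hij : F.rep i = some j) :
    F.ofReps w i = F.coef i * w ⟨j, mem_reps.2 (F.rep_rep hij)⟩ := by
  simp [ofReps, hij, mem_reps.2 (F.rep_rep hij)]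

theorem ofReps_apply_coe (w : F.reps → ℂ) (j : F.reps) : F.ofReps w j = w j := by
  rw [ofReps_of_rep_eq_some w (mem_reps.1 j.2), F.coef_rep (mem_reps.1 j.2), one_mul]

theorem ofReps_mem_space (w : F.reps → ℂ) : F.ofReps w ∈ F.space := by
  refine mem_space.2 ⟨fun i hi => by simp [ofReps, hi], fun i j hij => ?_⟩
  rw [ofReps_of_rep_eq_some w hij, ← ofReps_apply_coe w ⟨j, _⟩]

theorem ofReps_restrict {v : Fin n → ℂ} (hv : v ∈ F.space) : F.ofReps (fun j => v j) = v := by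
  funext i
  rcases hi : F.rep i with _ | j
  · simp [ofReps, hi, apply_eq_zero hv hi]
  · rw [ofReps_of_rep_eq_some _ hi, apply_eq_coef_mul hv hi]

variable (F)

theorem restrict_bijective : Function.Bijective F.restrict := by
  refine ⟨fun v w h => Subtype.ext ?_, fun w => ⟨⟨F.ofReps w, ofReps_mem_space w⟩, ?_⟩⟩
  · rw [← ofReps_restrict v.2, ← ofReps_restrict w.2]
    exact congrArg F.ofReps h
  · funext j
    exact ofReps_apply_coe w j

theorem finrank_space : Module.finrank ℂ F.space = #F.reps := by
  rw [(LinearEquiv.ofBijective _ F.restrict_bijective).finrank_eq,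
    Module.finrank_fintype_fun_eq_card, Fintype.card_coe]

theorem card_filter_mem_space {P : Finset ℂ} (h0 : 0 ∈ P)
    (hmul : ∀ ζ z : ℂ, ζ ^ r = 1 → z ∈ P → ζ * z ∈ P) :
    #{v ∈ Fintype.piFinset fun _ : Fin n => P | v ∈ F.space} = #P ^ #F.reps := by
  have hcard : #(Fintype.piFinset fun _ : F.reps => P) = #P ^ #F.reps := by simp
  rw [← hcard]
  refine card_nbij' (fun v j => v j) F.ofReps (fun v hv => ?_) (fun w hw => ?_)
    (fun v hv => ofReps_restrict (mem_filter.1 hv).2) (fun w _ => funext (ofReps_apply_coe w))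
  · simp only [coe_filter, Fintype.mem_piFinset] at hv
    simpa using fun j _ => hv.1 j
  · simp only [coe_filter, Fintype.coe_piFinset, Set.mem_pi, Fintype.mem_piFinset] at hw ⊢
    refine ⟨fun i => ?_, ofReps_mem_space w⟩
    rcases hi : F.rep i with _ | j
    · simpa [ofReps, hi] using h0
    · rw [ofReps_of_rep_eq_some w hi]
      exact hmul _ _ (F.coef_pow hi) (hw _ (Set.mem_univ _))

variable (n r) in
def top : BlockForm n r where
  rep := some
  coef _ := 1
  rep_rep h := by cases h; rfl
  coef_rep _ := rfl
  coef_pow _ := one_pow r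

theorem space_top : (top n r).space = ⊤ :=
  eq_top_iff.2 fun _ _ => mem_space.2 ⟨fun _ h => by simp [top] at h, fun _ _ h => by
    simp only [top, Option.some_inj] at h
    simp [top, h]⟩

def zeroBlock (t : Fin n) : BlockForm n r where
  rep i := if F.rep i = some t then none else F.rep i
  coef := F.coef
  rep_rep {i j} h := by
    split_ifs at h with hit
    have hj := F.rep_rep h
    have hjt : j ≠ t := by rintro rfl; exact hit h
    rw [if_neg (by simpa [hj] using hjt), hj]
  coef_rep {j} h := by
    split_ifs at h
    exact F.coef_rep h
  coef_pow {i j} h := by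
    split_ifs at h
    exact F.coef_pow h

def mergeBlock {s t : Fin n} (ht : F.rep t = some t) (hst : s ≠ t) {γ : ℂ} (hγ : γ ^ r = 1) :
    BlockForm n r where
  rep i := if F.rep i = some s then some t else F.rep i
  coef i := if F.rep i = some s then F.coef i * γ else F.coef i
  rep_rep {i j} h := by
    split_ifs at h with his
    · cases h
      rw [if_neg (by simpa [ht] using hst.symm), ht]
    · have hj := F.rep_rep h
      have hjs : j ≠ s := by rintro rfl; exact his h
      rw [if_neg (by simpa [hj] using hjs), hj]
  coef_rep {j} h := by
    split_ifs at h ⊢ with hjs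
    · cases h
      exact absurd (by simpa [ht] using hjs) hst.symm
    · exact F.coef_rep h
  coef_pow {i j} h := by
    split_ifs at h ⊢ with his
    · rw [mul_pow, F.coef_pow his, hγ, one_mul]
    · exact F.coef_pow h

variable {F}

theorem space_zeroBlock {t : Fin n} (ht : F.rep t = some t) :
    (F.zeroBlock t).space =
      F.space ⊓ LinearMap.ker (LinearMap.proj (R := ℂ) (φ := fun _ : Fin n => ℂ) t) := by
  ext v
  simp only [Submodule.mem_inf, mem_ker_proj, mem_space, zeroBlock]
  constructor
  · rintro ⟨h0, h1⟩
    have hvt : v t = 0 := h0 t (if_pos ht)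
    refine ⟨⟨fun i hi => h0 i (by simp [hi]), fun i j hij => ?_⟩, hvt⟩
    by_cases hjt : j = t
    · subst hjt
      rw [h0 i (if_pos hij), hvt, mul_zero]
    · exact h1 i j (by simpa [hij] using hjt)
  · rintro ⟨⟨h0, h1⟩, hvt⟩
    refine ⟨fun i hi => ?_, fun i j hij => ?_⟩
    · split_ifs at hi with hit
      · rw [h1 i t hit, hvt, mul_zero]
      · exact h0 i hi
    · split_ifs at hij
      exact h1 i j hij

theorem space_mergeBlock {s t : Fin n} (hs : F.rep s = some s) (ht : F.rep t = some t)
    (hst : s ≠ t) {γ : ℂ} (hγ : γ ^ r = 1) :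
    (F.mergeBlock ht hst hγ).space = F.space ⊓ LinearMap.ker
      (LinearMap.proj (R := ℂ) (φ := fun _ : Fin n => ℂ) s - γ • LinearMap.proj t) := by
  ext v
  simp only [Submodule.mem_inf, mem_ker_proj_sub_smul_proj, mem_space, mergeBlock]
  constructor
  · rintro ⟨h0, h1⟩
    have hvs : v s = γ * v t := by simpa [hs, F.coef_rep hs] using h1 s t (by simp [hs])
    refine ⟨⟨fun i hi => h0 i (by simp [hi]), fun i j hij => ?_⟩, hvs⟩
    by_cases hjs : j = s
    · subst hjs
      have := h1 i t (by simp [hij])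
      rw [if_pos hij] at this
      rw [this, hvs, mul_assoc]
    · have his : F.rep i ≠ some s := by simpa [hij] using hjs
      simpa [his] using h1 i j (by rw [if_neg his, hij])
  · rintro ⟨⟨h0, h1⟩, hvs⟩
    refine ⟨fun i hi => ?_, fun i j hij => ?_⟩
    · split_ifs at hi
      exact h0 i hi
    · split_ifs at hij ⊢ with his
      · cases hij
        rw [h1 i s his, hvs, mul_assoc]
      · exact h1 i j hij

variable (F)

theorem exists_space_eq_inf_ker_proj (hr : 0 < r) (k : Fin n) :
    ∃ F' : BlockForm n r, F'.space =
      F.space ⊓ LinearMap.ker (LinearMap.proj (R := ℂ) (φ := fun _ : Fin n => ℂ) k) := by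
  rcases hk : F.rep k with _ | t
  · exact ⟨F, (inf_of_le_left fun v hv => mem_ker_proj.2 (apply_eq_zero hv hk)).symm⟩
  · refine ⟨F.zeroBlock t, (space_zeroBlock (F.rep_rep hk)).trans
      (Submodule.inf_eq_inf_of_mem_iff fun v hv => ?_)⟩
    rw [mem_ker_proj, mem_ker_proj, apply_eq_coef_mul hv hk, mul_eq_zero,
      or_iff_right (coef_ne_zero hr hk)]

theorem exists_space_eq_inf_ker_sub (hr : 0 < r) (i j : Fin n) {ζ : ℂ} (hζ : ζ ^ r = 1) :
    ∃ F' : BlockForm n r, F'.space = F.space ⊓ LinearMap.ker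
      (LinearMap.proj (R := ℂ) (φ := fun _ : Fin n => ℂ) i - ζ • LinearMap.proj j) := by
  have hζ0 : ζ ≠ 0 := by rintro rfl; simp [zero_pow hr.ne'] at hζ
  set H := LinearMap.ker
    (LinearMap.proj (R := ℂ) (φ := fun _ : Fin n => ℂ) i - ζ • LinearMap.proj j)
  have keep (h : ∀ v ∈ F.space, v i = ζ * v j) : ∃ F' : BlockForm n r, F'.space = F.space ⊓ H :=
    ⟨F, (inf_of_le_left fun v hv => mem_ker_proj_sub_smul_proj.2 (h v hv)).symm⟩
  have zero {t : Fin n} (ht : F.rep t = some t) (h : ∀ v ∈ F.space, v i = ζ * v j ↔ v t = 0) :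
      ∃ F' : BlockForm n r, F'.space = F.space ⊓ H :=
    ⟨F.zeroBlock t, (space_zeroBlock ht).trans (Submodule.inf_eq_inf_of_mem_iff fun v hv => by
      rw [mem_ker_proj, mem_ker_proj_sub_smul_proj, h v hv])⟩
  rcases hi : F.rep i with _ | s <;> rcases hj : F.rep j with _ | t
  · exact keep fun v hv => by rw [apply_eq_zero hv hi, apply_eq_zero hv hj, mul_zero]
  · refine zero (F.rep_rep hj) fun v hv => ?_
    rw [apply_eq_zero hv hi, apply_eq_coef_mul hv hj]
    simp [hζ0, coef_ne_zero hr hj, eq_comm]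
  · refine zero (F.rep_rep hi) fun v hv => ?_
    rw [apply_eq_zero hv hj, apply_eq_coef_mul hv hi]
    simp [coef_ne_zero hr hi]
  rcases eq_or_ne s t with rfl | hst
  · by_cases hc : F.coef i = ζ * F.coef j
    · exact keep fun v hv => by
        rw [apply_eq_coef_mul hv hi, apply_eq_coef_mul hv hj, hc, mul_assoc]
    · refine zero (F.rep_rep hi) fun v hv => ?_
      rw [apply_eq_coef_mul hv hi, apply_eq_coef_mul hv hj, ← sub_eq_zero, ← mul_assoc,
        ← sub_mul, mul_eq_zero, or_iff_right (sub_ne_zero.2 hc)]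
  · have hγ : (ζ * F.coef j / F.coef i) ^ r = 1 := by
      rw [div_pow, mul_pow, hζ, F.coef_pow hj, F.coef_pow hi, one_mul, div_one]
    refine ⟨F.mergeBlock (F.rep_rep hj) hst hγ, (space_mergeBlock (F.rep_rep hi) _ hst hγ).trans
      (Submodule.inf_eq_inf_of_mem_iff fun v hv => ?_)⟩
    rw [mem_ker_proj_sub_smul_proj, mem_ker_proj_sub_smul_proj, apply_eq_coef_mul hv hi,
      apply_eq_coef_mul hv hj, div_mul_eq_mul_div, eq_div_iff (coef_ne_zero hr hi),
      mul_comm (v s), mul_assoc]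

theorem exists_space_eq_sInf (hr : 0 < r) (S : Finset (Submodule ℂ (Fin n → ℂ)))
    (hS : (S : Set (Submodule ℂ (Fin n → ℂ))) ⊆ arrA n r) :
    ∃ F : BlockForm n r, F.space = sInf (S : Set (Submodule ℂ (Fin n → ℂ))) := by
  induction S using Finset.induction_on with
  | empty => exact ⟨top n r, by simp [space_top]⟩
  | insert H S _ ih =>
    rw [coe_insert, Set.insert_subset_iff] at hS
    obtain ⟨F, hF⟩ := ih hS.2
    rw [coe_insert, sInf_insert, ← hF, inf_comm]
    rcases hS.1 with ⟨i, j, ζ, -, hζ, rfl⟩ | ⟨k, rfl⟩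
    · exact F.exists_space_eq_inf_ker_sub hr i j hζ
    · exact F.exists_space_eq_inf_ker_proj hr k

end BlockForm

section Dowling

open Polynomial

variable {n r : ℕ}

theorem arrA_finite (hr : 0 < r) : (arrA n r).Finite := by
  refine ((Set.finite_range fun p : Fin n × Fin n × nthRootsFinset r (1 : ℂ) =>
      LinearMap.ker (LinearMap.proj (R := ℂ) (φ := fun _ : Fin n => ℂ) p.1 -
        (p.2.2 : ℂ) • LinearMap.proj p.2.1)).union
    (Set.finite_range fun k : Fin n =>
      LinearMap.ker (LinearMap.proj (R := ℂ) (φ := fun _ : Fin n => ℂ) k))).subset ?_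
  rintro W (⟨i, j, ζ, -, hζ, rfl⟩ | ⟨k, rfl⟩)
  · exact Or.inl ⟨(i, j, ⟨ζ, (mem_nthRootsFinset hr 1).2 hζ⟩), rfl⟩
  · exact Or.inr ⟨k, rfl⟩

theorem top_notMem_arrA : (⊤ : Submodule ℂ (Fin n → ℂ)) ∉ arrA n r := by
  rintro (⟨i, j, ζ, hij, -, htop⟩ | ⟨k, htop⟩)
  · have := mem_ker_proj_sub_smul_proj.1 (htop ▸ Submodule.mem_top (x := Pi.single i 1))
    simp [Pi.single_eq_of_ne hij.ne'] at this
  · have := mem_ker_proj.1 (htop ▸ Submodule.mem_top (x := Pi.single k 1))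
    simp at this

theorem sInf_arrA : sInf (arrA n r) = ⊥ :=
  eq_bot_iff.2 fun _ hv => (Submodule.mem_bot ℂ).2 <| funext fun k =>
    mem_ker_proj.1 (Submodule.mem_sInf.1 hv _ (Or.inr ⟨k, rfl⟩))

theorem forall_notMem_arrA_iff {v : Fin n → ℂ} :
    (∀ H ∈ arrA n r, v ∉ H) ↔ (∀ k, v k ≠ 0) ∧ Function.Injective fun i => v i ^ r := by
  constructor
  · intro h
    have hv0 : ∀ k, v k ≠ 0 := fun k => h _ (Or.inr ⟨k, rfl⟩)
    have key {i j : Fin n} (hij : i < j) (hpow : v i ^ r = v j ^ r) : False := by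
      refine h _ (Or.inl ⟨i, j, v i / v j, hij, ?_, rfl⟩) (mem_ker_proj_sub_smul_proj.2 ?_)
      · rw [div_pow, hpow, div_self (pow_ne_zero _ (hv0 j))]
      · rw [div_mul_cancel₀ _ (hv0 j)]
    refine ⟨hv0, fun i j hpow => ?_⟩
    by_contra hne
    rcases lt_or_gt_of_ne hne with hij | hij
    · exact key hij hpow
    · exact key hij hpow.symm
  · rintro ⟨hv0, hinj⟩ H (⟨i, j, ζ, hij, hζ, rfl⟩ | ⟨k, rfl⟩) hvH
    · have hpow : v i ^ r = v j ^ r := by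
        rw [mem_ker_proj_sub_smul_proj.1 hvH, mul_pow, hζ, one_mul]
      exact hij.ne (hinj hpow)
    · exact hv0 k (mem_ker_proj.1 hvH)

theorem Complex.card_nthRootsFinset {a : ℂ} (ha : a ≠ 0) (hr : 0 < r) :
    #(nthRootsFinset r a) = r := by
  have hζ := Complex.isPrimitiveRoot_exp r hr.ne'
  rw [nthRootsFinset_def, Multiset.toFinset_card_of_nodup (hζ.nthRoots_nodup ha),
    hζ.card_nthRoots, if_pos (IsAlgClosed.exists_pow_nat_eq a hr)]

noncomputable def rootsWithZero (N : ℕ) : Finset ℂ := insert 0 (nthRootsFinset N (1 : ℂ))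

theorem card_rootsWithZero {N : ℕ} (hN : 0 < N) : #(rootsWithZero N) = N + 1 := by
  rw [rootsWithZero, card_insert_of_notMem (by simp [mem_nthRootsFinset hN, zero_pow hN.ne']),
    (Complex.isPrimitiveRoot_exp N hN.ne').card_nthRootsFinset]

theorem mul_mem_rootsWithZero {N : ℕ} (hrN : r ∣ N) {ζ z : ℂ} (hζ : ζ ^ r = 1)
    (hz : z ∈ rootsWithZero N) : ζ * z ∈ rootsWithZero N := by
  rcases mem_insert.1 hz with rfl | hz
  · simp [rootsWithZero]
  have hN : 0 < N := Nat.pos_of_ne_zero fun h => by simp [h] at hz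
  obtain ⟨c, rfl⟩ := hrN
  rw [mem_nthRootsFinset hN] at hz
  refine mem_insert_of_mem ((mem_nthRootsFinset hN _).2 ?_)
  rw [mul_pow, hz, pow_mul, hζ, one_pow, one_mul]

theorem card_filter_mem_sInf_arrA (hr : 0 < r) {N : ℕ} (hN : 0 < N) (hrN : r ∣ N)
    (S : Finset (Submodule ℂ (Fin n → ℂ)))
    (hS : (S : Set (Submodule ℂ (Fin n → ℂ))) ⊆ arrA n r) :
    #{v ∈ Fintype.piFinset fun _ : Fin n => rootsWithZero N |
        v ∈ sInf (S : Set (Submodule ℂ (Fin n → ℂ)))} =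
      (N + 1) ^ Module.finrank ℂ ↥(sInf (S : Set (Submodule ℂ (Fin n → ℂ)))) := by
  obtain ⟨F, hF⟩ := BlockForm.exists_space_eq_sInf hr S hS
  rw [← hF, F.card_filter_mem_space (by simp [rootsWithZero])
    fun _ _ hζ hz => mul_mem_rootsWithZero hrN hζ hz, F.finrank_space, card_rootsWithZero hN]

theorem card_filter_forall_notMem_arrA (hr : 0 < r) {m : ℕ} (hm : 0 < m) :
    #{v ∈ Fintype.piFinset fun _ : Fin n => rootsWithZero (m * r) | ∀ H ∈ arrA n r, v ∉ H} =
      m.descFactorial n * r ^ n := by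
  have hmr : 0 < m * r := Nat.mul_pos hm hr
  have hfilter :
      {v ∈ Fintype.piFinset fun _ : Fin n => rootsWithZero (m * r) | ∀ H ∈ arrA n r, v ∉ H} =
        {v ∈ Fintype.piFinset fun _ : Fin n => nthRootsFinset (m * r) (1 : ℂ) |
          Function.Injective ((· ^ r) ∘ v)} := by
    ext v
    simp only [mem_filter, Fintype.mem_piFinset, forall_notMem_arrA_iff, rootsWithZero,
      mem_insert]
    constructor
    · rintro ⟨hmem, hv0, hinj⟩
      exact ⟨fun i => (hmem i).resolve_left (hv0 i), hinj⟩
    · rintro ⟨hmem, hinj⟩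
      exact ⟨fun i => Or.inr (hmem i),
        fun k => ne_zero_of_mem_nthRootsFinset one_ne_zero (hmem k), hinj⟩
  rw [hfilter, card_filter_injective_comp _ (nthRootsFinset m (1 : ℂ)) _ (fun t ht => ?_)
    (fun u hu => ?_), Fintype.card_fin, (Complex.isPrimitiveRoot_exp m hm.ne').card_nthRootsFinset]
  · rw [mem_nthRootsFinset hmr] at ht
    rw [mem_nthRootsFinset hm, ← pow_mul, mul_comm, ht]
  · rw [mem_nthRootsFinset hm] at hu
    have : {t ∈ nthRootsFinset (m * r) (1 : ℂ) | t ^ r = u} = nthRootsFinset r u := by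
      ext t
      rw [mem_filter, mem_nthRootsFinset hmr, mem_nthRootsFinset hr]
      exact ⟨And.right, fun h => ⟨by rw [mul_comm, pow_mul, h, hu], h⟩⟩
    rw [this, Complex.card_nthRootsFinset (by rintro rfl; simp [zero_pow hm.ne'] at hu) hr]

theorem charPoly_arrA (hr : 0 < r) :
    charPoly (arrA_finite (n := n) hr).toFinset =
      ∏ i ∈ range n, (X - C ((i * r + 1 : ℕ) : ℤ)) := by
  refine eq_of_infinite_eval_eq _ _ (Set.infinite_of_injective_forall_mem
    (f := fun m : ℕ => (((m + n + 1) * r + 1 : ℕ) : ℤ)) (fun a b h => ?_) fun m => ?_)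
  · have := Nat.eq_of_mul_eq_mul_right hr (Nat.succ_injective (Nat.cast_injective h))
    omega
  set M := m + n + 1
  rw [Set.mem_ofPred_eq,
    eval_charPoly_eq_card _ (Fintype.piFinset fun _ => rootsWithZero (M * r)) _ fun S hS =>
      card_filter_mem_sInf_arrA hr (by positivity) (dvd_mul_left r M) S
        fun H hH => (Set.Finite.mem_toFinset _).1 (hS hH)]
  simp only [Set.Finite.mem_toFinset]
  have hpow : r ^ n = ∏ _ ∈ range n, r := by simp
  rw [card_filter_forall_notMem_arrA hr (by omega), eval_prod, Nat.descFactorial_eq_prod_range,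
    hpow, ← prod_mul_distrib, Nat.cast_prod]
  refine prod_congr rfl fun i hi => ?_
  have hiM : i ≤ M := by have := mem_range.1 hi; omega
  simp only [eval_sub, eval_X, eval_C]
  push_cast [Nat.cast_sub hiM]
  ring

end Dowling

/-- The Möbius function `μ(0̂, 1̂)` of the Dowling lattice
`Q_n(r) ≅ L(A_n(r))` — the intersection lattice of the arrangement `A_n(r)`, ordered by
reverse inclusion, with `0̂ = ℂ^n` and `1̂` the intersection of all the hyperplanes — equals
`(-1)^n (r+1)(2r+1)⋯((n-1)r+1)`. -/
theorem mobius_dowling (n r : ℕ) (hr : 0 < r) [Finite ↥(interLat (arrA n r))] :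
    mob (OrderDual.toDual
          (⟨(⊤ : Submodule ℂ (Fin n → ℂ)), ∅, Set.empty_subset _, sInf_empty.symm⟩ :
            ↥(interLat (arrA n r))))
        (OrderDual.toDual ⟨sInf (arrA n r), arrA n r, subset_rfl, rfl⟩) =
      (-1 : ℤ) ^ n * ∏ i ∈ Finset.range n, ((i * r + 1 : ℕ) : ℤ) := by
  have hA := arrA_finite (n := n) hr
  have : Finite ↥{W | ∃ S ⊆ arrA n r, W = sInf S} := ‹Finite ↥(interLat (arrA n r))›
  refine (mob_top_eq_sum_sInf_eq hA top_notMem_arrA _).trans ?_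
  show ∑ S ∈ _ with sInf _ = sInf (arrA n r), _ = _
  rw [sInf_arrA, ← eval_zero_charPoly, charPoly_arrA hr, Polynomial.eval_prod]
  simp only [Polynomial.eval_sub, Polynomial.eval_X, Polynomial.eval_C, zero_sub]
  rw [prod_neg, card_range]
end

section
/- The intersection lattice L(A_n(r)) of the arrangement A_n(r) in ℂ^n is isomorphic to the Dowling lattice Q_n(r), via the map sending a Dowling partition (I, π, γ) to the subspace defined by z_i = γ(i)^{-1} γ(j) z_j whenever i, j lie in the same block, and z_i = 0 for i ∈ I. -/
/-- An element of the Dowling lattice `Q_n(μ_r)`: an equivalence class of `μ_r`-labelled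
partial partitions of `{1, ..., n}`.  It is encoded by its zero block `zero`, the
"same nonzero block" relation `rel` (an equivalence relation on the complement of `zero`),
and the relative labelling `lab i j = γ(i)⁻¹ γ(j) ∈ μ_r` for `i, j` in a common nonzero
block (normalised to `1` for unrelated pairs); this data is exactly an equivalence class of
`G`-prepartitions `(I, π, γ)` for `G = μ_r`. -/
structure DowlingElt (n r : ℕ) where
  zero : Set (Fin n)
  rel : Fin n → Fin n → Prop
  lab : Fin n → Fin n → ℂ
  rel_compl : ∀ i j, rel i j → i ∉ zero ∧ j ∉ zero
  rel_refl : ∀ i, i ∉ zero → rel i i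
  rel_symm : ∀ i j, rel i j → rel j i
  rel_trans : ∀ i j k, rel i j → rel j k → rel i k
  lab_root : ∀ i j, lab i j ^ r = 1
  lab_one : ∀ i j, ¬ rel i j → lab i j = 1
  lab_refl : ∀ i, lab i i = 1
  lab_symm : ∀ i j, rel i j → lab i j * lab j i = 1
  lab_cocycle : ∀ i j k, rel i j → rel j k → lab i k = lab i j * lab j k

/-- The partial order of the Dowling lattice `Q_n(r)`: `x ≤ y` iff `y` is obtained from `x`
by merges, i.e. the zero block grows, and each nonzero block of `x` is either absorbed into
the zero block of `y` or contained (with compatible labels) in a nonzero block of `y`. -/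
instance DowlingElt.instPreorder (n r : ℕ) : Preorder (DowlingElt n r) where
  le x y := x.zero ⊆ y.zero ∧
    ∀ i j, x.rel i j → (i ∈ y.zero ∧ j ∈ y.zero) ∨ (y.rel i j ∧ y.lab i j = x.lab i j)
  le_refl x := ⟨subset_rfl, fun i j h => Or.inr ⟨h, rfl⟩⟩
  le_trans x y z h1 h2 := by
    refine ⟨h1.1.trans h2.1, fun i j h => ?_⟩
    rcases h1.2 i j h with hi | ⟨hr, hl⟩
    · exact Or.inl ⟨h2.1 hi.1, h2.1 hi.2⟩
    · rcases h2.2 i j hr with hi | ⟨hr', hl'⟩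
      · exact Or.inl hi
      · exact Or.inr ⟨hr', hl'.trans hl⟩


/-- The map `ρ` from the Dowling lattice to subspaces of `ℂ^n`: the element `(I, π, γ)` is
sent to the subspace defined by `z_i = γ(i)⁻¹ γ(j) z_j` whenever `i, j` lie in the same
nonzero block, and `z_i = 0` for `i ∈ I`. -/
noncomputable def rho {n r : ℕ} (x : DowlingElt n r) : Submodule ℂ (Fin n → ℂ) where
  carrier := {z | (∀ i j, x.rel i j → z i = x.lab i j * z j) ∧ ∀ i ∈ x.zero, z i = 0}
  add_mem' := by
    rintro a b ⟨ha1, ha2⟩ ⟨hb1, hb2⟩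
    refine ⟨fun i j h => ?_, fun i hi => ?_⟩
    · simp only [Pi.add_apply, ha1 i j h, hb1 i j h]; ring
    · simp only [Pi.add_apply, ha2 i hi, hb2 i hi, add_zero]
  zero_mem' := ⟨fun i j _ => by simp, fun i _ => rfl⟩
  smul_mem' := by
    rintro c a ⟨h1, h2⟩
    refine ⟨fun i j h => ?_, fun i hi => ?_⟩
    · simp only [Pi.smul_apply, smul_eq_mul, h1 i j h]; ring
    · simp only [Pi.smul_apply, h2 i hi, smul_zero]

section Aux

open scoped Classical

variable {n r : ℕ}

lemma pow_ne_zero' (hr : 0 < r) {c : ℂ} (hc : c ^ r = 1) : c ≠ 0 := by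
  intro h
  rw [h, zero_pow hr.ne'] at hc
  exact zero_ne_one hc

lemma mem_rho {x : DowlingElt n r} {z : Fin n → ℂ} :
    z ∈ rho x ↔ (∀ i j, x.rel i j → z i = x.lab i j * z j) ∧ ∀ i ∈ x.zero, z i = 0 :=
  Iff.rfl

lemma lab_ne_zero (hr : 0 < r) (x : DowlingElt n r) (i j : Fin n) : x.lab i j ≠ 0 :=
  pow_ne_zero' hr (x.lab_root i j)

/-- Witness vector supported on the block of `i`. -/
noncomputable def witness (x : DowlingElt n r) (i : Fin n) : Fin n → ℂ :=
  fun j => if x.rel j i then x.lab j i else 0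

lemma witness_mem (x : DowlingElt n r) (i : Fin n) : witness x i ∈ rho x := by
  refine ⟨fun j k hjk => ?_, fun j hj => ?_⟩
  · by_cases hk : x.rel k i
    · have hj' : x.rel j i := x.rel_trans _ _ _ hjk hk
      simp only [witness, if_pos hk, if_pos hj']
      exact x.lab_cocycle _ _ _ hjk hk
    · have hj' : ¬ x.rel j i := fun h => hk (x.rel_trans _ _ _ (x.rel_symm _ _ hjk) h)
      simp only [witness, if_neg hk, if_neg hj', mul_zero]
  · have hj' : ¬ x.rel j i := fun h => (x.rel_compl _ _ h).1 hj
    simp only [witness, if_neg hj']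

lemma witness_self {x : DowlingElt n r} {i : Fin n} (hi : i ∉ x.zero) : witness x i i = 1 := by
  simp [witness, x.rel_refl i hi, x.lab_refl i]

/-- Coordinates forced to vanish on `W`. -/
def zeroW (W : Submodule ℂ (Fin n → ℂ)) : Set (Fin n) := {i | ∀ z ∈ W, z i = 0}

lemma not_mem_zeroW {W : Submodule ℂ (Fin n → ℂ)} {i : Fin n} (hi : i ∉ zeroW W) :
    ∃ z ∈ W, z i ≠ 0 := by
  simpa [zeroW, not_forall] using hi

/-- Coordinates proportionally linked on `W` by an `r`-th root of unity. -/
def relW (r : ℕ) (W : Submodule ℂ (Fin n → ℂ)) (i j : Fin n) : Prop :=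
  i ∉ zeroW W ∧ j ∉ zeroW W ∧ ∃ c : ℂ, c ^ r = 1 ∧ ∀ z ∈ W, z i = c * z j

noncomputable def labW (r : ℕ) (W : Submodule ℂ (Fin n → ℂ)) (i j : Fin n) : ℂ :=
  if h : relW r W i j then h.2.2.choose else 1

lemma labW_spec {W : Submodule ℂ (Fin n → ℂ)} {i j : Fin n} (h : relW r W i j) :
    labW r W i j ^ r = 1 ∧ ∀ z ∈ W, z i = labW r W i j * z j := by
  rw [labW, dif_pos h]
  exact h.2.2.choose_spec

lemma c_unique {W : Submodule ℂ (Fin n → ℂ)} {i j : Fin n} {c c' : ℂ}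
    (hi : i ∉ zeroW W) (hc : ∀ z ∈ W, z i = c * z j) (hc' : ∀ z ∈ W, z i = c' * z j)
    (h0 : c' ≠ 0) : c = c' := by
  obtain ⟨z, hz, hzi⟩ := not_mem_zeroW hi
  have hzj : z j ≠ 0 := by
    intro h
    rw [hc' z hz, h, mul_zero] at hzi
    exact hzi rfl
  exact mul_right_cancel₀ hzj (by rw [← hc z hz, hc' z hz])

/-- The inverse map: a subspace gives rise to a Dowling element. -/
noncomputable def psi (hr : 0 < r) (W : Submodule ℂ (Fin n → ℂ)) : DowlingElt n r where
  zero := zeroW W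
  rel := relW r W
  lab := labW r W
  rel_compl i j h := ⟨h.1, h.2.1⟩
  rel_refl i hi := ⟨hi, hi, 1, one_pow r, fun z _ => (one_mul _).symm⟩
  rel_symm i j h := by
    obtain ⟨hi, hj, c, hc, hz⟩ := h
    refine ⟨hj, hi, c⁻¹, by rw [inv_pow, hc, inv_one], fun z hzW => ?_⟩
    rw [hz z hzW, inv_mul_cancel_left₀ (pow_ne_zero' hr hc)]
  rel_trans i j k h1 h2 := by
    obtain ⟨hi, hj, c, hc, hz⟩ := h1
    obtain ⟨_, hk, c', hc', hz'⟩ := h2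
    refine ⟨hi, hk, c * c', by rw [mul_pow, hc, hc', one_mul], fun z hzW => ?_⟩
    rw [hz z hzW, hz' z hzW, mul_assoc]
  lab_root i j := by
    by_cases h : relW r W i j
    · exact (labW_spec h).1
    · rw [labW, dif_neg h, one_pow]
  lab_one i j h := by rw [labW, dif_neg h]
  lab_refl i := by
    by_cases h : relW r W i i
    · exact c_unique h.1 (labW_spec h).2 (fun z _ => (one_mul _).symm) one_ne_zero
    · rw [labW, dif_neg h]
  lab_symm i j h := by
    have h' : relW r W j i := by
      obtain ⟨hi, hj, c, hc, hz⟩ := h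
      refine ⟨hj, hi, c⁻¹, by rw [inv_pow, hc, inv_one], fun z hzW => ?_⟩
      rw [hz z hzW, inv_mul_cancel_left₀ (pow_ne_zero' hr hc)]
    obtain ⟨z, hz, hzi⟩ := not_mem_zeroW h.1
    have e1 := (labW_spec h).2 z hz
    have e2 := (labW_spec h').2 z hz
    have : (labW r W i j * labW r W j i) * z i = 1 * z i := by
      rw [one_mul, mul_assoc, ← e2, ← e1]
    exact mul_right_cancel₀ hzi this
  lab_cocycle i j k h1 h2 := by
    have h3 : relW r W i k := by
      obtain ⟨hi, hj, c, hc, hz⟩ := h1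
      obtain ⟨_, hk, c', hc', hz'⟩ := h2
      refine ⟨hi, hk, c * c', by rw [mul_pow, hc, hc', one_mul], fun z hzW => ?_⟩
      rw [hz z hzW, hz' z hzW, mul_assoc]
    refine c_unique h3.1 (labW_spec h3).2 (fun z hz => ?_)
      (mul_ne_zero (pow_ne_zero' hr (labW_spec h1).1) (pow_ne_zero' hr (labW_spec h2).1))
    rw [(labW_spec h1).2 z hz, (labW_spec h2).2 z hz, mul_assoc]

lemma DowlingElt.ext' {x y : DowlingElt n r} (h1 : x.zero = y.zero)
    (h2 : x.rel = y.rel) (h3 : x.lab = y.lab) : x = y := by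
  cases x; cases y
  simp only at h1 h2 h3
  subst h1; subst h2; subst h3
  rfl

lemma zeroW_rho (x : DowlingElt n r) : zeroW (rho x) = x.zero := by
  ext i
  constructor
  · intro hi
    by_contra hx
    have h := hi _ (witness_mem x i)
    rw [witness_self hx] at h
    exact one_ne_zero h
  · intro hi z hz
    exact hz.2 i hi

lemma relW_rho (hr : 0 < r) (x : DowlingElt n r) (i j : Fin n) :
    relW r (rho x) i j ↔ x.rel i j := by
  constructor
  · rintro ⟨hi, hj, c, hc, hz⟩
    rw [zeroW_rho] at hi hj
    by_contra hrel
    have h1 := hz _ (witness_mem x j)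
    rw [witness_self hj] at h1
    have h0 : witness x j i = 0 := by simp [witness, hrel]
    rw [h0, mul_one] at h1
    exact pow_ne_zero' hr hc h1.symm
  · intro h
    have hc := x.rel_compl _ _ h
    rw [← zeroW_rho x] at hc
    exact ⟨hc.1, hc.2, x.lab i j, x.lab_root i j, fun z hz => hz.1 i j h⟩

lemma labW_rho (hr : 0 < r) (x : DowlingElt n r) (i j : Fin n) :
    labW r (rho x) i j = x.lab i j := by
  by_cases h : x.rel i j
  · have h' : relW r (rho x) i j := (relW_rho hr x i j).2 h
    exact c_unique h'.1 (labW_spec h').2 (fun z hz => hz.1 i j h) (lab_ne_zero hr x i j)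
  · rw [labW, dif_neg (fun h' => h ((relW_rho hr x i j).1 h')), x.lab_one i j h]

lemma psi_rho (hr : 0 < r) (x : DowlingElt n r) : psi hr (rho x) = x :=
  DowlingElt.ext' (zeroW_rho x)
    (funext fun i => funext fun j => propext (relW_rho hr x i j))
    (funext fun i => funext fun j => labW_rho hr x i j)

lemma mem_hyp {i j : Fin n} {ζ : ℂ} (w : Fin n → ℂ) :
    w ∈ LinearMap.ker (LinearMap.proj (R := ℂ) (φ := fun _ : Fin n => ℂ) i -
      ζ • LinearMap.proj j) ↔ w i = ζ * w j := by
  simp [LinearMap.mem_ker, sub_eq_zero]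

lemma mem_coord {k : Fin n} (w : Fin n → ℂ) :
    w ∈ LinearMap.ker (LinearMap.proj (R := ℂ) (φ := fun _ : Fin n => ℂ) k) ↔ w k = 0 := by
  simp [LinearMap.mem_ker]

lemma rho_psi (hr : 0 < r) {W : Submodule ℂ (Fin n → ℂ)} (hW : W ∈ interLat (arrA n r)) :
    rho (psi hr W) = W := by
  obtain ⟨S, hS, rfl⟩ := hW
  apply le_antisymm
  · intro z hz
    rw [Submodule.mem_sInf]
    intro H hH
    have hWH : sInf S ≤ H := sInf_le hH
    rcases hS hH with ⟨i, j, ζ, hij, hζ, rfl⟩ | ⟨k, rfl⟩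
    · have hcon : ∀ w ∈ sInf S, w i = ζ * w j := fun w hw => (mem_hyp w).1 (hWH hw)
      rw [mem_hyp]
      by_cases hi : i ∈ zeroW (sInf S)
      · have hj : j ∈ zeroW (sInf S) := by
          intro w hw
          have h1 := hcon w hw
          rw [hi w hw] at h1
          exact (mul_eq_zero.mp h1.symm).resolve_left (pow_ne_zero' hr hζ)
        rw [hz.2 i hi, hz.2 j hj, mul_zero]
      · have hj : j ∉ zeroW (sInf S) := by
          intro hj
          apply hi
          intro w hw
          rw [hcon w hw, hj w hw, mul_zero]
        have hrel : relW r (sInf S) i j := ⟨hi, hj, ζ, hζ, hcon⟩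
        have e1 : labW r (sInf S) i j = ζ :=
          c_unique hi (labW_spec hrel).2 hcon (pow_ne_zero' hr hζ)
        have h2 : z i = labW r (sInf S) i j * z j := hz.1 i j hrel
        rwa [e1] at h2
    · have hk : k ∈ zeroW (sInf S) := fun w hw => (mem_coord w).1 (hWH hw)
      rw [mem_coord]
      exact hz.2 k hk
  · intro z hz
    refine ⟨fun i j h => (labW_spec h).2 z hz, fun i hi => hi z hz⟩

lemma rho_mem (hr : 0 < r) (x : DowlingElt n r) : rho x ∈ interLat (arrA n r) := by
  refine ⟨{H | H ∈ arrA n r ∧ rho x ≤ H}, fun H hH => hH.1, ?_⟩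
  apply le_antisymm
  · exact le_sInf fun H hH => hH.2
  · intro z hz
    rw [Submodule.mem_sInf] at hz
    refine ⟨fun i j h => ?_, fun i hi => ?_⟩
    · rcases lt_trichotomy i j with hij | hij | hij
      · have hmem : LinearMap.ker (LinearMap.proj (R := ℂ) (φ := fun _ : Fin n => ℂ) i -
            x.lab i j • LinearMap.proj j) ∈
            {H | H ∈ arrA n r ∧ rho x ≤ H} := by
          refine ⟨Or.inl ⟨i, j, x.lab i j, hij, x.lab_root i j, rfl⟩, fun w hw => ?_⟩
          exact (mem_hyp w).2 (hw.1 i j h)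
        exact (mem_hyp z).1 (hz _ hmem)
      · subst hij
        rw [x.lab_refl i, one_mul]
      · have h' : x.rel j i := x.rel_symm _ _ h
        have hmem : LinearMap.ker (LinearMap.proj (R := ℂ) (φ := fun _ : Fin n => ℂ) j -
            x.lab j i • LinearMap.proj i) ∈
            {H | H ∈ arrA n r ∧ rho x ≤ H} := by
          refine ⟨Or.inl ⟨j, i, x.lab j i, hij, x.lab_root j i, rfl⟩, fun w hw => ?_⟩
          exact (mem_hyp w).2 (hw.1 j i h')
        have hzj : z j = x.lab j i * z i := (mem_hyp z).1 (hz _ hmem)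
        rw [hzj, ← mul_assoc, x.lab_symm i j h, one_mul]
    · have hmem : LinearMap.ker (LinearMap.proj (R := ℂ) (φ := fun _ : Fin n => ℂ) i) ∈
          {H | H ∈ arrA n r ∧ rho x ≤ H} := by
        refine ⟨Or.inr ⟨i, rfl⟩, fun w hw => (mem_coord w).2 (hw.2 i hi)⟩
      exact (mem_coord z).1 (hz _ hmem)

lemma rho_antitone {x y : DowlingElt n r} (h : x ≤ y) : rho y ≤ rho x := by
  intro z hz
  refine ⟨fun i j hij => ?_, fun i hi => hz.2 i (h.1 hi)⟩
  rcases h.2 i j hij with ⟨hi, hj⟩ | ⟨hr', hl⟩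
  · rw [hz.2 i hi, hz.2 j hj, mul_zero]
  · rw [hz.1 i j hr', hl]

lemma psi_antitone (hr : 0 < r) {W W' : Submodule ℂ (Fin n → ℂ)} (h : W ≤ W') :
    psi hr W' ≤ psi hr W := by
  refine ⟨fun i hi z hz => hi z (h hz), ?_⟩
  rintro i j ⟨hi', hj', c, hc, hcz⟩
  have hcW : ∀ z ∈ W, z i = c * z j := fun z hz => hcz z (h hz)
  by_cases hi : i ∈ zeroW W
  · left
    refine ⟨hi, fun z hz => ?_⟩
    have h1 := hcW z hz
    rw [hi z hz] at h1
    exact (mul_eq_zero.mp h1.symm).resolve_left (pow_ne_zero' hr hc)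
  · right
    have hj : j ∉ zeroW W := by
      intro hj
      apply hi
      intro z hz
      rw [hcW z hz, hj z hz, mul_zero]
    have hrel : relW r W i j := ⟨hi, hj, c, hc, hcW⟩
    refine ⟨hrel, ?_⟩
    have e1 : labW r W i j = c := c_unique hi (labW_spec hrel).2 hcW (pow_ne_zero' hr hc)
    have e2 : labW r W' i j = c :=
      c_unique hi' (labW_spec ⟨hi', hj', c, hc, hcz⟩).2 hcz (pow_ne_zero' hr hc)
    show labW r W i j = labW r W' i j
    rw [e1, e2]

end Aux

/-- The intersection lattice `L(A_n(r))` of the arrangement `A_n(r)`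
(ordered by reverse inclusion) is isomorphic to the Dowling lattice `Q_n(r)`, via the map
sending a Dowling partition `(I, π, γ)` to the subspace defined by
`z_i = γ(i)⁻¹ γ(j) z_j` for `i, j` in the same block and `z_i = 0` for `i ∈ I`. -/

theorem dowling_iso_interLat (n r : ℕ) (hr : 0 < r) :
    ∃ e : DowlingElt n r ≃o (↥(interLat (arrA n r)))ᵒᵈ,
      ∀ x : DowlingElt n r,
        ((OrderDual.ofDual (e x) : ↥(interLat (arrA n r))) : Submodule ℂ (Fin n → ℂ)) =
          rho x := by
  refine ⟨⟨⟨fun x => OrderDual.toDual ⟨rho x, rho_mem hr x⟩,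
      fun W => psi hr ((OrderDual.ofDual W : ↥(interLat (arrA n r))) : Submodule ℂ (Fin n → ℂ)),
      fun x => psi_rho hr x, fun W => ?_⟩, ?_⟩, fun x => rfl⟩
  · exact Subtype.ext (rho_psi hr (OrderDual.ofDual W).2)
  · intro a b
    show (⟨rho b, rho_mem hr b⟩ : ↥(interLat (arrA n r))) ≤ ⟨rho a, rho_mem hr a⟩ ↔ a ≤ b
    rw [Subtype.mk_le_mk]
    constructor
    · intro h
      have h2 := psi_antitone hr h
      rwa [psi_rho hr a, psi_rho hr b] at h2
    · exact rho_antitone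
end

section
/- The d-divisible Dowling lattice Q_n(r,d) is a pure lattice with rank function rk((I,π,γ)) = ⌊n/d⌋ + 1 − |π| for elements above the artificially adjoined minimum 0̂, and rk(0̂) = 0. -/
/-- The number of nonzero blocks `|π|` of a Dowling lattice element. -/
noncomputable def nblocks {n r : ℕ} (x : DowlingElt n r) : ℕ :=
  Nat.card {B : Set (Fin n) // ∃ i, i ∉ x.zero ∧ B = {j | x.rel i j}}

/-- `d`-divisibility: every nonzero block has size divisible by `d`. -/
def DDiv {n r : ℕ} (d : ℕ) (x : DowlingElt n r) : Prop :=
  ∀ i, i ∉ x.zero → d ∣ Nat.card {j : Fin n // x.rel i j}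

/-- The `d`-divisible Dowling lattice `Q_n(r, d)`: the elements of `Q_n(r)` all of whose
nonzero blocks have size divisible by `d`, together with an adjoined minimum `⊥`
(the minimum `0̂` of `Q_n(r)`). -/
abbrev QnRD (n r d : ℕ) := WithBot {x : DowlingElt n r // DDiv d x}

/-- The rank function of `Q_n(r, d)`: `0` on `0̂` and `⌊n/d⌋ + 1 - |π|` otherwise. -/
noncomputable def rkd {n r : ℕ} (d : ℕ) : QnRD n r d → ℤ :=
  WithBot.recBotCoe 0 (fun x => ((n / d : ℕ) : ℤ) + 1 - nblocks x.1)

/-!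
Any set `S` of elements of `Q_n(r)` has a least upper bound: chain the blocks of the members of
`S` into path components, multiplying labels along the way; a component becomes a block if it
avoids the zero blocks of `S` and its labels do not depend on the path, and falls into the zero
block otherwise. Since `d`-divisibility is inherited by coarser elements, joins in `Q_n(r, d)`
are joins in `Q_n(r)`, and the meet of two elements is the join of their common `d`-divisible
lower bounds (or `0̂` if there is none).

The number of blocks is antitone, and below any `y > x` there is an element `z ≥ x` obtained by
absorbing one block of `x` into the zero block or by fusing two blocks of `x`; it has exactly one
block fewer than `x`, so along a cover the number of blocks drops by exactly one. An atom is a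
minimal `d`-divisible element: carving `d` points out of its zero block or splitting `d` points
off a larger block would go below it, so its zero block has fewer than `d` points and all its
blocks have exactly `d` points, hence it has `⌊n/d⌋` blocks.
-/

section PairBounds

variable {α : Type*} [Preorder α] {P : α → Prop}

theorem isLUB_pair_bot_left {β : Type*} [Preorder β] [OrderBot β] (y : β) :
    IsLUB {⊥, y} y :=
  ⟨by rintro w (rfl | rfl) <;> simp, fun _ hw => hw (Set.mem_insert_of_mem _ rfl)⟩

theorem WithBot.exists_isLUB_pair_subtype (hP : IsUpperSet {a | P a})
    (hsup : ∀ a b : α, ∃ c, IsLUB {a, b} c) (x y : WithBot {a // P a}) :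
    ∃ z, IsLUB {x, y} z := by
  induction x using WithBot.recBotCoe with
  | bot => exact ⟨y, isLUB_pair_bot_left y⟩
  | coe a =>
  induction y using WithBot.recBotCoe with
  | bot => exact ⟨a, Set.pair_comm (a : WithBot {a // P a}) ⊥ ▸ isLUB_pair_bot_left _⟩
  | coe b =>
  obtain ⟨c, hc⟩ := hsup a b
  have hPc : P c := hP (hc.1 (Set.mem_insert _ _)) a.2
  refine ⟨((⟨c, hPc⟩ : {a // P a}) : WithBot _), ?_, ?_⟩
  · rintro w (rfl | rfl)
    · exact WithBot.coe_le_coe.2 (hc.1 (Set.mem_insert _ _))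
    · exact WithBot.coe_le_coe.2 (hc.1 (Set.mem_insert_of_mem _ rfl))
  · intro w hw
    induction w using WithBot.recBotCoe with
    | bot => exact absurd (hw (Set.mem_insert _ _)) (WithBot.not_coe_le_bot _)
    | coe u =>
    have hau : a ≤ u := WithBot.coe_le_coe.1 (hw (Set.mem_insert _ _))
    have hbu : b ≤ u := WithBot.coe_le_coe.1 (hw (Set.mem_insert_of_mem _ rfl))
    refine WithBot.coe_le_coe.2 (hc.2 ?_)
    rintro v (rfl | rfl)
    exacts [hau, hbu]

theorem WithBot.exists_isGLB_pair_subtype (hP : IsUpperSet {a | P a})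
    (hsup : ∀ s : Set α, s.Nonempty → ∃ c, IsLUB s c) (x y : WithBot {a // P a}) :
    ∃ z, IsGLB {x, y} z := by
  induction x using WithBot.recBotCoe with
  | bot => exact ⟨⊥, fun _ _ => bot_le, fun _ hw => hw (Set.mem_insert _ _)⟩
  | coe a =>
  induction y using WithBot.recBotCoe with
  | bot => exact ⟨⊥, fun _ _ => bot_le, fun _ hw => hw (Set.mem_insert_of_mem _ rfl)⟩
  | coe b =>
  set L := {v : α | P v ∧ v ≤ a ∧ v ≤ b}
  have lower_mem : ∀ w : {a // P a}, (w : WithBot {a // P a}) ∈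
      lowerBounds {(a : WithBot {a // P a}), (b : WithBot _)} → w.1 ∈ L := fun w hw =>
    ⟨w.2, (WithBot.coe_le_coe.1 (hw (Set.mem_insert _ _)) : w ≤ a),
      (WithBot.coe_le_coe.1 (hw (Set.mem_insert_of_mem _ rfl)) : w ≤ b)⟩
  rcases L.eq_empty_or_nonempty with hL | hL
  · refine ⟨⊥, fun _ _ => bot_le, fun w hw => ?_⟩
    induction w using WithBot.recBotCoe with
    | bot => exact le_rfl
    | coe u => exact absurd (lower_mem u hw) (hL ▸ Set.notMem_empty _)
  obtain ⟨v, hv⟩ := hL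
  obtain ⟨c, hc⟩ := hsup L ⟨v, hv⟩
  have hPc : P c := hP (hc.1 hv) hv.1
  refine ⟨((⟨c, hPc⟩ : {a // P a}) : WithBot _), ?_, fun w hw => ?_⟩
  · rintro w (rfl | rfl)
    · exact WithBot.coe_le_coe.2 (hc.2 fun _ hv => hv.2.1)
    · exact WithBot.coe_le_coe.2 (hc.2 fun _ hv => hv.2.2)
  · induction w using WithBot.recBotCoe with
    | bot => exact bot_le
    | coe u => exact WithBot.coe_le_coe.2 (hc.1 (lower_mem u hw))

end PairBounds

noncomputable section

open Classical Finset

namespace DowlingElt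

variable {n r d : ℕ}

section Blocks

variable {x y : DowlingElt n r} {i j : Fin n}

theorem notMem_zero_left (h : x.rel i j) : i ∉ x.zero := (x.rel_compl i j h).1

theorem notMem_zero_right (h : x.rel i j) : j ∉ x.zero := (x.rel_compl i j h).2

theorem rel_euclidean (h : x.rel i j) {k : Fin n} (h' : x.rel i k) : x.rel j k :=
  x.rel_trans j i k (x.rel_symm i j h) h'

theorem rel_of_le (hxy : x ≤ y) (h : x.rel i j) (hi : i ∉ y.zero) :
    y.rel i j ∧ y.lab i j = x.lab i j :=
  (hxy.2 i j h).resolve_left fun hz => hi hz.1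

theorem mem_zero_of_le (hxy : x ≤ y) (h : x.rel i j) (hi : i ∈ y.zero) : j ∈ y.zero :=
  ((hxy.2 i j h).resolve_right fun hr => notMem_zero_left hr.1 hi).2

/-- Empty when `i` lies in the zero block. -/
def block (x : DowlingElt n r) (i : Fin n) : Finset (Fin n) := univ.filter (x.rel i)

def support (x : DowlingElt n r) : Finset (Fin n) := x.zero.toFinsetᶜ

def blocks (x : DowlingElt n r) : Finset (Finset (Fin n)) := x.support.image x.block

@[simp] theorem mem_block : j ∈ x.block i ↔ x.rel i j := by simp [block]

@[simp] theorem mem_support : i ∈ x.support ↔ i ∉ x.zero := by simp [support]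

theorem mem_blocks {B : Finset (Fin n)} : B ∈ x.blocks ↔ ∃ i, i ∉ x.zero ∧ x.block i = B := by
  simp [blocks]

theorem self_mem_block (hi : i ∉ x.zero) : i ∈ x.block i := mem_block.2 (x.rel_refl i hi)

theorem block_mem_blocks (hi : i ∉ x.zero) : x.block i ∈ x.blocks := mem_blocks.2 ⟨i, hi, rfl⟩

theorem block_eq_of_rel (h : x.rel i j) : x.block i = x.block j := by
  ext k
  simp only [mem_block]
  exact ⟨rel_euclidean h, x.rel_trans i j k h⟩

theorem block_eq_block_iff (hi : i ∉ x.zero) : x.block i = x.block j ↔ x.rel j i :=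
  ⟨fun h => mem_block.1 (h ▸ self_mem_block hi), fun h => (block_eq_of_rel h).symm⟩

theorem card_support : x.support.card = n - x.zero.toFinset.card := by
  simp [support, card_compl]

theorem natCard_rel_eq_card_block (x : DowlingElt n r) (i : Fin n) :
    Nat.card {j // x.rel i j} = (x.block i).card := by
  rw [← Nat.card_eq_finsetCard]
  exact Nat.card_congr (Equiv.subtypeEquivRight fun _ => mem_block.symm)

@[simp] theorem coe_block : (x.block i : Set (Fin n)) = {j | x.rel i j} := by
  ext; simp

theorem nblocks_eq_card_blocks (x : DowlingElt n r) : nblocks x = x.blocks.card := by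
  have h : {B : Set (Fin n) | ∃ i, i ∉ x.zero ∧ B = {j | x.rel i j}} =
      (↑) '' (x.blocks : Set (Finset (Fin n))) := by
    ext B
    simp [mem_blocks, eq_comm]
  rw [nblocks, ← Set.ncard_coe_finset, ← Set.ncard_image_of_injective _ Finset.coe_injective, ← h]
  rfl

theorem dDiv_iff : DDiv d x ↔ ∀ B ∈ x.blocks, d ∣ B.card := by
  simp only [DDiv, natCard_rel_eq_card_block, mem_blocks]
  exact ⟨fun h B ⟨i, hi, hB⟩ => hB ▸ h i hi, fun h i hi => h _ ⟨i, hi, rfl⟩⟩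

theorem card_eq_sum_card_blocks {s : Finset (Fin n)} (hz : ∀ i ∈ s, i ∉ x.zero)
    (hcl : ∀ i ∈ s, ∀ j, x.rel i j → j ∈ s) : s.card = ∑ B ∈ s.image x.block, B.card := by
  rw [card_eq_sum_card_image x.block s]
  refine sum_congr rfl fun B hB => ?_
  obtain ⟨i, hi, rfl⟩ := mem_image.1 hB
  congr 1
  ext j
  simp only [mem_filter]
  refine ⟨fun ⟨_, hj⟩ => hj ▸ self_mem_block (hz j ‹_›), fun hj => ?_⟩
  exact ⟨hcl i hi j (mem_block.1 hj), (block_eq_of_rel (mem_block.1 hj)).symm⟩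

theorem dvd_card_of_closed (hx : DDiv d x) {s : Finset (Fin n)} (hz : ∀ i ∈ s, i ∉ x.zero)
    (hcl : ∀ i ∈ s, ∀ j, x.rel i j → j ∈ s) : d ∣ s.card := by
  rw [card_eq_sum_card_blocks hz hcl]
  refine dvd_sum fun B hB => dDiv_iff.1 hx B ?_
  obtain ⟨i, hi, rfl⟩ := mem_image.1 hB
  exact block_mem_blocks (hz i hi)

/-- A block of a coarser element is a union of blocks of the finer one. -/
theorem isUpperSet_dDiv (d : ℕ) : IsUpperSet {x : DowlingElt n r | DDiv d x} := by
  intro x y hxy hx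
  refine dDiv_iff.2 fun B hB => ?_
  obtain ⟨i, hi, rfl⟩ := mem_blocks.1 hB
  refine dvd_card_of_closed hx (fun j hj hjx => ?_) fun j hj k hk => ?_
  · exact notMem_zero_right (mem_block.1 hj) (hxy.1 hjx)
  · have hj : y.rel i j := mem_block.1 hj
    exact mem_block.2 (y.rel_trans i j k hj (rel_of_le hxy hk (notMem_zero_right hj)).1)

theorem card_blocks_le_of_le (hxy : x ≤ y) : y.blocks.card ≤ x.blocks.card := by
  refine card_le_card_of_surjOn (fun C => C.biUnion y.block) fun B hB => ?_
  obtain ⟨i, hi, rfl⟩ := mem_blocks.1 (mem_coe.1 hB)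
  have hix : i ∉ x.zero := fun h => hi (hxy.1 h)
  refine ⟨x.block i, block_mem_blocks hix, ?_⟩
  ext k
  simp only [mem_biUnion, mem_block]
  refine ⟨fun ⟨j, hij, hjk⟩ => y.rel_trans i j k (rel_of_le hxy hij hi).1 hjk, fun h => ?_⟩
  exact ⟨i, x.rel_refl i hix, h⟩

end Blocks

section Steps

variable {x y : DowlingElt n r} {i j t p q : Fin n}

def absorb (x : DowlingElt n r) (t : Fin n) : DowlingElt n r where
  zero := x.zero ∪ {j | x.rel t j}
  rel i j := x.rel i j ∧ ¬ x.rel t i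
  lab i j := if x.rel i j ∧ ¬ x.rel t i then x.lab i j else 1
  rel_compl i j h := by
    refine ⟨fun hi => hi.elim (notMem_zero_left h.1) h.2, fun hj => ?_⟩
    exact hj.elim (notMem_zero_right h.1) fun htj =>
      h.2 (x.rel_trans t j i htj (x.rel_symm i j h.1))
  rel_refl i hi := by
    simp only [Set.mem_union, Set.mem_ofPred_eq, not_or] at hi
    exact ⟨x.rel_refl i hi.1, hi.2⟩
  rel_symm i j h :=
    ⟨x.rel_symm i j h.1, fun htj => h.2 (x.rel_trans t j i htj (x.rel_symm i j h.1))⟩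
  rel_trans i j k h h' := ⟨x.rel_trans i j k h.1 h'.1, h.2⟩
  lab_root i j := by split <;> simp [x.lab_root]
  lab_one i j h := if_neg h
  lab_refl i := by split <;> simp [x.lab_refl]
  lab_symm i j h := by
    rw [if_pos h, if_pos ⟨x.rel_symm i j h.1,
      fun htj => h.2 (x.rel_trans t j i htj (x.rel_symm i j h.1))⟩]
    exact x.lab_symm i j h.1
  lab_cocycle i j k h h' := by
    rw [if_pos ⟨x.rel_trans i j k h.1 h'.1, h.2⟩, if_pos h, if_pos h']
    exact x.lab_cocycle i j k h.1 h'.1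

theorem le_absorb (x : DowlingElt n r) (t : Fin n) : x ≤ x.absorb t := by
  refine ⟨Set.subset_union_left, fun i j h => ?_⟩
  by_cases hti : x.rel t i
  · exact Or.inl ⟨Or.inr hti, Or.inr (x.rel_trans t i j hti h)⟩
  · exact Or.inr ⟨⟨h, hti⟩, if_pos ⟨h, hti⟩⟩

theorem absorb_le (hxy : x ≤ y) (ht : t ∈ y.zero) : x.absorb t ≤ y := by
  refine ⟨Set.union_subset hxy.1 fun j htj => mem_zero_of_le hxy htj ht, ?_⟩
  rintro i j ⟨hij, hti⟩
  refine (hxy.2 i j hij).imp_right fun ⟨hr, hl⟩ => ⟨hr, hl.trans ?_⟩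
  exact (if_pos ⟨hij, hti⟩).symm

theorem blocks_absorb (x : DowlingElt n r) (t : Fin n) :
    (x.absorb t).blocks = x.blocks.erase (x.block t) := by
  have block_eq : ∀ i, ¬ x.rel t i → (x.absorb t).block i = x.block i := fun i hti => by
    ext j
    simp only [mem_block]
    exact and_iff_left hti
  ext B
  simp only [mem_erase, mem_blocks]
  constructor
  · rintro ⟨i, hi, rfl⟩
    simp only [absorb, Set.mem_union, Set.mem_ofPred_eq, not_or] at hi
    rw [block_eq i hi.2, Ne, block_eq_block_iff hi.1]
    exact ⟨hi.2, i, hi.1, rfl⟩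
  · rintro ⟨hB, i, hi, rfl⟩
    have hti : ¬ x.rel t i := fun h => hB (block_eq_of_rel h).symm
    refine ⟨i, ?_, block_eq i hti⟩
    simp only [absorb, Set.mem_union, Set.mem_ofPred_eq, not_or]
    exact ⟨hi, hti⟩

theorem card_blocks_absorb (ht : t ∉ x.zero) :
    (x.absorb t).blocks.card + 1 = x.blocks.card := by
  rw [blocks_absorb, card_erase_add_one (block_mem_blocks ht)]

variable (x) (p q) in
def MergeRel (i j : Fin n) : Prop :=
  x.rel i j ∨ ((x.rel p i ∨ x.rel q i) ∧ (x.rel p j ∨ x.rel q j))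

theorem MergeRel.symm (h : MergeRel x p q i j) : MergeRel x p q j i :=
  h.imp (x.rel_symm i j) And.symm

theorem MergeRel.trans {k : Fin n} (h : MergeRel x p q i j) (h' : MergeRel x p q j k) :
    MergeRel x p q i k := by
  have fused_of_rel : ∀ {a b}, x.rel a b → (x.rel p b ∨ x.rel q b) → (x.rel p a ∨ x.rel q a) :=
    fun hab => Or.imp (fun h => rel_euclidean (x.rel_symm _ _ h) (x.rel_symm _ _ hab))
      (fun h => rel_euclidean (x.rel_symm _ _ h) (x.rel_symm _ _ hab))
  rcases h with h | ⟨hi, hj⟩ <;> rcases h' with h' | ⟨hj', hk⟩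
  · exact Or.inl (x.rel_trans i j k h h')
  · exact Or.inr ⟨fused_of_rel h hj', hk⟩
  · exact Or.inr ⟨hi, fused_of_rel (x.rel_symm j k h') hj⟩
  · exact Or.inr ⟨hi, hk⟩

theorem MergeRel.notMem_zero (h : MergeRel x p q i j) : i ∉ x.zero :=
  h.elim notMem_zero_left fun h => h.1.elim notMem_zero_right notMem_zero_right

theorem rel_of_fused (hxy : x ≤ y) (hpq : y.rel p q) (ha : x.rel p i ∨ x.rel q i) : y.rel p i :=
  ha.elim (fun h => (rel_of_le hxy h (notMem_zero_left hpq)).1)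
    fun h => y.rel_trans p q i hpq (rel_of_le hxy h (notMem_zero_right hpq)).1

theorem MergeRel.rel_of_notMem_zero (hxy : x ≤ y) (hpq : y.rel p q)
    (h : MergeRel x p q i j) (hi : i ∉ y.zero) : y.rel i j :=
  h.elim (fun h => (rel_of_le hxy h hi).1) fun ⟨hi, hj⟩ =>
    rel_euclidean (rel_of_fused hxy hpq hi) (rel_of_fused hxy hpq hj)

theorem MergeRel.rel_of_mem_zero (hxy : x ≤ y) (hpq : y.rel p q)
    (h : MergeRel x p q i j) (hi : i ∈ y.zero) : x.rel i j :=
  h.resolve_right fun h' => notMem_zero_right (rel_of_fused hxy hpq h'.1) hi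

/-- The fused block takes its labels from `y`, so that the result lies below `y`. -/
def merge (hxy : x ≤ y) (hpq : y.rel p q) : DowlingElt n r where
  zero := x.zero
  rel := MergeRel x p q
  lab i j := if MergeRel x p q i j ∧ i ∉ y.zero then y.lab i j else x.lab i j
  rel_compl i j h := ⟨h.notMem_zero, h.symm.notMem_zero⟩
  rel_refl i hi := Or.inl (x.rel_refl i hi)
  rel_symm i j h := h.symm
  rel_trans i j k h h' := h.trans h'
  lab_root i j := by split <;> simp [x.lab_root, y.lab_root]
  lab_one i j h := by rw [if_neg fun h' => h h'.1, x.lab_one i j fun h' => h (Or.inl h')]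
  lab_refl i := by split <;> simp [x.lab_refl, y.lab_refl]
  lab_symm i j h := by
    by_cases hi : i ∈ y.zero
    · have hij := h.rel_of_mem_zero hxy hpq hi
      simp only [hi, mem_zero_of_le hxy hij hi, not_true, and_false, if_false]
      exact x.lab_symm i j hij
    · have hij := h.rel_of_notMem_zero hxy hpq hi
      simp only [h, h.symm, hi, notMem_zero_right hij, not_false_eq_true, and_self, if_true]
      exact y.lab_symm i j hij
  lab_cocycle i j k h h' := by
    by_cases hi : i ∈ y.zero
    · have hij := h.rel_of_mem_zero hxy hpq hi
      have hj := mem_zero_of_le hxy hij hi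
      simp only [hi, hj, not_true, and_false, if_false]
      exact x.lab_cocycle i j k hij (h'.rel_of_mem_zero hxy hpq hj)
    · have hij := h.rel_of_notMem_zero hxy hpq hi
      have hj := notMem_zero_right hij
      simp only [h, h', h.trans h', hi, hj, not_false_eq_true, and_self, if_true]
      exact y.lab_cocycle i j k hij (h'.rel_of_notMem_zero hxy hpq hj)

theorem le_merge (hxy : x ≤ y) (hpq : y.rel p q) : x ≤ merge hxy hpq := by
  refine ⟨subset_rfl, fun i j h => Or.inr ⟨Or.inl h, ?_⟩⟩
  change ite _ _ _ = _
  split_ifs with hi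
  exacts [(rel_of_le hxy h hi.2).2, rfl]

theorem merge_le (hxy : x ≤ y) (hpq : y.rel p q) : merge hxy hpq ≤ y := by
  refine ⟨hxy.1, fun i j h => ?_⟩
  by_cases hi : i ∈ y.zero
  · exact Or.inl ⟨hi, mem_zero_of_le hxy (h.rel_of_mem_zero hxy hpq hi) hi⟩
  · exact Or.inr ⟨h.rel_of_notMem_zero hxy hpq hi, (if_pos ⟨h, hi⟩).symm⟩

theorem block_merge (hxy : x ≤ y) (hpq : y.rel p q) (i : Fin n) :
    (merge hxy hpq).block i =
      if x.rel p i ∨ x.rel q i then x.block p ∪ x.block q else x.block i := by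
  ext j
  simp only [mem_block, merge, MergeRel]
  split_ifs with hi
  · simp only [mem_union, mem_block, hi, true_and, or_iff_right_iff_imp]
    exact fun hij => hi.imp (fun h => x.rel_trans p i j h hij) fun h => x.rel_trans q i j h hij
  · simp [hi]

theorem card_blocks_merge (hxy : x ≤ y) (hpq : y.rel p q) (hnpq : ¬ x.rel p q) :
    (merge hxy hpq).blocks.card + 1 = x.blocks.card := by
  have hp : p ∉ x.zero := fun h => notMem_zero_left hpq (hxy.1 h)
  have hq : q ∉ x.zero := fun h => notMem_zero_right hpq (hxy.1 h)
  have hP : x.block p ∈ x.blocks := block_mem_blocks hp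
  have hQ : x.block q ∈ x.blocks.erase (x.block p) :=
    mem_erase.2 ⟨fun h => hnpq ((block_eq_block_iff hq).1 h), block_mem_blocks hq⟩
  have fused_iff : ∀ {i}, i ∉ x.zero →
      ((x.rel p i ∨ x.rel q i) ↔ x.block i = x.block p ∨ x.block i = x.block q) :=
    fun hi => by rw [block_eq_block_iff hi, block_eq_block_iff hi]
  have hU : x.block p ∪ x.block q ∉ (x.blocks.erase (x.block p)).erase (x.block q) := by
    simp only [mem_erase, mem_blocks, not_and]
    rintro hUQ hUP ⟨i, hi, hiU⟩
    have hpi : x.rel i p := mem_block.1 (hiU ▸ mem_union_left _ (self_mem_block hp))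
    exact hUP (hiU.symm.trans (block_eq_of_rel hpi))
  have blocks_eq : (merge hxy hpq).blocks =
      insert (x.block p ∪ x.block q) ((x.blocks.erase (x.block p)).erase (x.block q)) := by
    ext B
    simp only [mem_insert, mem_erase, mem_blocks]
    constructor
    · rintro ⟨i, hi, rfl⟩
      rw [block_merge]
      split_ifs with hfi
      · exact Or.inl rfl
      · rw [fused_iff hi, not_or] at hfi
        exact Or.inr ⟨hfi.2, hfi.1, i, hi, rfl⟩
    · rintro (rfl | ⟨hBQ, hBP, i, hi, rfl⟩)
      · exact ⟨p, hp, by rw [block_merge, if_pos (Or.inl (x.rel_refl p hp))]⟩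
      · refine ⟨i, hi, ?_⟩
        rw [block_merge, if_neg ((fused_iff hi).not.2 (not_or.2 ⟨hBP, hBQ⟩))]
  rw [blocks_eq, card_insert_of_notMem hU, card_erase_add_one hQ, card_erase_add_one hP]

theorem exists_card_blocks_succ_of_lt (hxy : x < y) :
    ∃ z, x ≤ z ∧ z ≤ y ∧ z.blocks.card + 1 = x.blocks.card := by
  by_cases hzero : y.zero ⊆ x.zero
  · obtain ⟨p, q, hpq, hnpq⟩ : ∃ p q, y.rel p q ∧ ¬ x.rel p q := by
      by_contra! h
      refine hxy.not_ge ⟨hzero, fun i j hij => Or.inr ⟨h i j hij, ?_⟩⟩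
      exact (rel_of_le hxy.le (h i j hij) (notMem_zero_left hij)).2.symm
    exact ⟨merge hxy.le hpq, le_merge hxy.le hpq, merge_le hxy.le hpq,
      card_blocks_merge hxy.le hpq hnpq⟩
  · obtain ⟨t, hty, htx⟩ := Set.not_subset.1 hzero
    exact ⟨x.absorb t, le_absorb x t, absorb_le hxy.le hty, card_blocks_absorb htx⟩

theorem card_blocks_of_covBy {a b : {x : DowlingElt n r // DDiv d x}} (hab : a ⋖ b) :
    a.1.blocks.card = b.1.blocks.card + 1 := by
  obtain ⟨z, haz, hzb, hz⟩ := exists_card_blocks_succ_of_lt (show a.1 < b.1 from hab.lt)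
  let z' : {x : DowlingElt n r // DDiv d x} := ⟨z, isUpperSet_dDiv d haz a.2⟩
  have haz' : a < z' := lt_of_le_not_ge haz fun hza => by
    have := card_blocks_le_of_le (show z ≤ a.1 from hza)
    omega
  have hbz : b.1 ≤ z := by
    by_contra h
    exact hab.2 haz' (lt_of_le_not_ge hzb h)
  have := card_blocks_le_of_le hzb
  have := card_blocks_le_of_le hbz
  omega

end Steps

section Atoms

variable {b : DowlingElt n r} {i : Fin n} {N : Finset (Fin n)}

def carve (b : DowlingElt n r) (N : Finset (Fin n)) (hN : ↑N ⊆ b.zero) : DowlingElt n r where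
  zero := b.zero \ ↑N
  rel i j := b.rel i j ∨ (i ∈ N ∧ j ∈ N)
  lab i j := if b.rel i j then b.lab i j else 1
  rel_compl i j h := by
    rcases h with h | ⟨hi, hj⟩
    · exact ⟨fun hz => notMem_zero_left h hz.1, fun hz => notMem_zero_right h hz.1⟩
    · exact ⟨fun hz => hz.2 hi, fun hz => hz.2 hj⟩
  rel_refl i hi := by
    by_cases hz : i ∈ b.zero
    · have hiN : i ∈ N := by simpa [hz] using hi
      exact Or.inr ⟨hiN, hiN⟩
    · exact Or.inl (b.rel_refl i hz)
  rel_symm i j h := h.imp (b.rel_symm i j) And.symm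
  rel_trans i j k h h' := by
    rcases h with h | ⟨hi, hj⟩ <;> rcases h' with h' | ⟨hj', hk⟩
    · exact Or.inl (b.rel_trans i j k h h')
    · exact absurd (hN hj') (notMem_zero_right h)
    · exact absurd (hN hj) (notMem_zero_left h')
    · exact Or.inr ⟨hi, hk⟩
  lab_root i j := by split <;> simp [b.lab_root]
  lab_one i j h := if_neg fun hb => h (Or.inl hb)
  lab_refl i := by split <;> simp [b.lab_refl]
  lab_symm i j h := by
    by_cases hb : b.rel i j
    · rw [if_pos hb, if_pos (b.rel_symm i j hb)]
      exact b.lab_symm i j hb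
    · rw [if_neg hb, if_neg fun hb' => hb (b.rel_symm j i hb'), one_mul]
  lab_cocycle i j k h h' := by
    by_cases hb : b.rel i j
    · have hb' : b.rel j k := h'.resolve_right fun h' => notMem_zero_right hb (hN h'.1)
      rw [if_pos hb, if_pos hb', if_pos (b.rel_trans i j k hb hb')]
      exact b.lab_cocycle i j k hb hb'
    · have hi := hN (h.resolve_left hb).1
      have hj := hN (h.resolve_left hb).2
      rw [if_neg hb, if_neg fun hr => notMem_zero_left hr hi,
        if_neg fun hr => notMem_zero_left hr hj, one_mul]

theorem carve_le (hN : ↑N ⊆ b.zero) : b.carve N hN ≤ b := by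
  refine ⟨Set.sdiff_subset, fun i j h => ?_⟩
  rcases h with h | ⟨hi, hj⟩
  · exact Or.inr ⟨h, (if_pos h).symm⟩
  · exact Or.inl ⟨hN hi, hN hj⟩

theorem not_le_carve (hN : ↑N ⊆ b.zero) (hne : N.Nonempty) : ¬ b ≤ b.carve N hN := by
  obtain ⟨t, ht⟩ := hne
  exact fun h => (h.1 (hN ht)).2 ht

theorem block_carve (hN : ↑N ⊆ b.zero) (i : Fin n) :
    (b.carve N hN).block i = if i ∈ N then N else b.block i := by
  ext j
  simp only [mem_block, carve]
  split_ifs with hi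
  · simp only [hi, true_and, or_iff_right_iff_imp]
    exact fun h => absurd (hN hi) (notMem_zero_left h)
  · simp [hi]

theorem exists_lt_of_le_card_zero (hd : 0 < d) (hb : DDiv d b)
    (h : d ≤ b.zero.toFinset.card) : ∃ z, DDiv d z ∧ z < b := by
  obtain ⟨N, hNz, hN⟩ := exists_subset_card_eq h
  have hN' : ↑N ⊆ b.zero := fun t ht => Set.mem_toFinset.1 (hNz ht)
  refine ⟨b.carve N hN', fun i hi => ?_, lt_of_le_not_ge (carve_le hN')
    (not_le_carve hN' (card_pos.1 (hN ▸ hd)))⟩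
  rw [natCard_rel_eq_card_block, block_carve]
  split_ifs with hiN
  · exact hN ▸ dvd_rfl
  · rw [← natCard_rel_eq_card_block]
    exact hb i fun hz => hi ⟨hz, hiN⟩

def split (b : DowlingElt n r) (N : Finset (Fin n)) : DowlingElt n r where
  zero := b.zero
  rel i j := b.rel i j ∧ (i ∈ N ↔ j ∈ N)
  lab i j := if i ∈ N ↔ j ∈ N then b.lab i j else 1
  rel_compl i j h := b.rel_compl i j h.1
  rel_refl i hi := ⟨b.rel_refl i hi, Iff.rfl⟩
  rel_symm i j h := ⟨b.rel_symm i j h.1, h.2.symm⟩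
  rel_trans i j k h h' := ⟨b.rel_trans i j k h.1 h'.1, h.2.trans h'.2⟩
  lab_root i j := by split <;> simp [b.lab_root]
  lab_one i j h := by
    split_ifs with hiff
    exacts [b.lab_one i j fun hb => h ⟨hb, hiff⟩, rfl]
  lab_refl i := by rw [if_pos Iff.rfl, b.lab_refl]
  lab_symm i j h := by
    rw [if_pos h.2, if_pos h.2.symm]
    exact b.lab_symm i j h.1
  lab_cocycle i j k h h' := by
    rw [if_pos (h.2.trans h'.2), if_pos h.2, if_pos h'.2]
    exact b.lab_cocycle i j k h.1 h'.1

theorem split_le (b : DowlingElt n r) (N : Finset (Fin n)) : b.split N ≤ b :=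
  ⟨subset_rfl, fun _ _ h => Or.inr ⟨h.1, (if_pos h.2).symm⟩⟩

theorem not_le_split {t u : Fin n} (htu : b.rel t u) (ht : t ∈ N) (hu : u ∉ N) :
    ¬ b ≤ b.split N :=
  fun h => hu ((rel_of_le h htu (show t ∉ b.zero from notMem_zero_left htu)).1.2.1 ht)

theorem block_split (b : DowlingElt n r) (N : Finset (Fin n)) (i : Fin n) :
    (b.split N).block i = if i ∈ N then N ∩ b.block i else b.block i \ N := by
  ext j
  simp only [mem_block, split]
  split_ifs with hi <;> simp [hi, and_comm]

theorem exists_lt_of_lt_card_block (hd : 0 < d) (hb : DDiv d b)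
    (h : d < (b.block i).card) : ∃ z, DDiv d z ∧ z < b := by
  obtain ⟨N, hNi, hN⟩ := exists_subset_card_eq h.le
  obtain ⟨u, hu, huN⟩ := exists_of_ssubset (hNi.ssubset_of_ne fun h' => h.ne (by rw [← h', hN]))
  obtain ⟨t, ht⟩ := card_pos.1 (hN ▸ hd)
  refine ⟨b.split N, fun k hk => ?_, lt_of_le_not_ge (split_le b N)
    (not_le_split (rel_euclidean (mem_block.1 (hNi ht)) (mem_block.1 hu)) ht huN)⟩
  have hNk : N ∩ b.block k = N ∨ N ∩ b.block k = ∅ := by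
    by_cases hik : b.rel i k
    · exact Or.inl (inter_eq_left.2 (block_eq_of_rel hik ▸ hNi))
    · refine Or.inr (eq_empty_of_forall_notMem fun j hj => hik ?_)
      rw [mem_inter, mem_block] at hj
      exact b.rel_trans i j k (mem_block.1 (hNi hj.1)) (b.rel_symm k j hj.2)
  have hdN : d ∣ (N ∩ b.block k).card := by
    rcases hNk with h | h <;> simp [h, hN]
  have hdk : d ∣ (b.block k).card := natCard_rel_eq_card_block b k ▸ hb k hk
  rw [natCard_rel_eq_card_block, block_split]
  split_ifs
  · exact hdN
  · rw [card_sdiff]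
    exact Nat.dvd_sub hdk hdN

theorem card_blocks_of_isMin (hd : 0 < d) {b : {x : DowlingElt n r // DDiv d x}}
    (hb : IsMin b) : b.1.blocks.card = n / d := by
  obtain ⟨b, hbd⟩ := b
  have no_lt : ∀ z, DDiv d z → ¬ z < b := fun z hz hzb =>
    hb.not_lt (show (⟨z, hz⟩ : {x : DowlingElt n r // DDiv d x}) < ⟨b, hbd⟩ from hzb)
  have hzero : b.zero.toFinset.card < d := by
    by_contra! h
    obtain ⟨z, hz, hzb⟩ := exists_lt_of_le_card_zero hd hbd h
    exact no_lt z hz hzb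
  have hblocks : ∀ B ∈ b.blocks, B.card = d := by
    intro B hB
    obtain ⟨i, hi, rfl⟩ := mem_blocks.1 hB
    have hle := Nat.le_of_dvd (card_pos.2 ⟨i, self_mem_block hi⟩) (dDiv_iff.1 hbd _ hB)
    refine (hle.lt_or_eq.resolve_left fun hlt => ?_).symm
    obtain ⟨z, hz, hzb⟩ := exists_lt_of_lt_card_block hd hbd hlt
    exact no_lt z hz hzb
  have hsupport : b.support.card = d * b.blocks.card := by
    rw [card_eq_sum_card_blocks (fun i hi => mem_support.1 hi)
      (fun i hi j hij => mem_support.2 (notMem_zero_right hij)), ← blocks,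
      sum_congr rfl hblocks, sum_const, smul_eq_mul, mul_comm]
  have hn : n = d * b.blocks.card + b.zero.toFinset.card := by
    have := card_le_univ b.zero.toFinset
    rw [Fintype.card_fin] at this
    rw [← hsupport, card_support]
    omega
  calc b.blocks.card = (d * b.blocks.card + b.zero.toFinset.card) / d := by
        rw [Nat.mul_add_div hd, Nat.div_eq_of_lt hzero, add_zero]
    _ = n / d := by rw [← hn]

end Atoms

section Join

inductive Path (S : Set (DowlingElt n r)) : Fin n → Fin n → ℂ → Prop
  | refl (i : Fin n) : Path S i i 1
  | tail {i j k : Fin n} {c : ℂ} {x : DowlingElt n r} :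
      Path S i j c → x ∈ S → x.rel j k → Path S i k (c * x.lab j k)

namespace Path

variable {S : Set (DowlingElt n r)} {i j k : Fin n} {c c' : ℂ}

theorem append (h : Path S i j c) (h' : Path S j k c') : Path S i k (c * c') := by
  induction h' with
  | refl => simpa using h
  | tail _ hx hr ih => exact mul_assoc c _ _ ▸ ih.tail hx hr

theorem single {x : DowlingElt n r} (hx : x ∈ S) (h : x.rel i j) : Path S i j (x.lab i j) := by
  simpa using (Path.refl i).tail hx h

theorem ne_zero (h : Path S i j c) : c ≠ 0 := by
  induction h with
  | refl => exact one_ne_zero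
  | @tail j k c x _ _ hr ih =>
    refine mul_ne_zero ih fun h0 => zero_ne_one (α := ℂ) ?_
    simpa [h0] using x.lab_symm j k hr

theorem pow_eq_one (h : Path S i j c) : c ^ r = 1 := by
  induction h with
  | refl => exact one_pow r
  | tail _ _ _ ih => rw [mul_pow, ih, DowlingElt.lab_root, one_mul]

theorem symm (h : Path S i j c) : Path S j i c⁻¹ := by
  induction h with
  | refl => simpa using Path.refl i
  | @tail j k c x _ hx hr ih =>
    have hlab : x.lab k j = (x.lab j k)⁻¹ :=
      eq_inv_of_mul_eq_one_left (mul_comm (x.lab j k) _ ▸ x.lab_symm j k hr)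
    rw [mul_inv_rev, ← hlab]
    exact (single hx (x.rel_symm j k hr)).append ih

end Path

def Balanced (S : Set (DowlingElt n r)) (i : Fin n) : Prop :=
  (∀ j c, Path S i j c → ∀ x ∈ S, j ∉ x.zero) ∧
  (∀ j c c', Path S i j c → Path S i j c' → c = c')

variable {S : Set (DowlingElt n r)} {i j : Fin n} {c : ℂ}

theorem Balanced.of_path (hi : Balanced S i) (h : Path S i j c) : Balanced S j := by
  refine ⟨fun k c' hk x hx => hi.1 k _ (h.append hk) x hx, fun k a a' h1 h2 => ?_⟩
  exact mul_left_cancel₀ h.ne_zero (hi.2 k _ _ (h.append h1) (h.append h2))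

def join (S : Set (DowlingElt n r)) : DowlingElt n r where
  zero := {i | ¬ Balanced S i}
  rel i j := Balanced S i ∧ ∃ c, Path S i j c
  lab i j := if h : Balanced S i ∧ ∃ c, Path S i j c then h.2.choose else 1
  rel_compl i j h := ⟨fun hi => hi h.1, fun hj => hj (h.1.of_path h.2.choose_spec)⟩
  rel_refl i hi := ⟨not_not.1 hi, 1, Path.refl i⟩
  rel_symm i j h := ⟨h.1.of_path h.2.choose_spec, _, h.2.choose_spec.symm⟩
  rel_trans i j k h h' := ⟨h.1, _, h.2.choose_spec.append h'.2.choose_spec⟩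
  lab_root i j := by
    split
    · next h => exact h.2.choose_spec.pow_eq_one
    · exact one_pow r
  lab_one i j h := dif_neg h
  lab_refl i := by
    split
    · next h => exact h.1.2 i _ 1 h.2.choose_spec (Path.refl i)
    · rfl
  lab_symm i j h := by
    have hji : Balanced S j ∧ ∃ c, Path S j i c :=
      ⟨h.1.of_path h.2.choose_spec, _, h.2.choose_spec.symm⟩
    rw [dif_pos h, dif_pos hji, hji.1.2 i _ _ hji.2.choose_spec h.2.choose_spec.symm]
    exact mul_inv_cancel₀ h.2.choose_spec.ne_zero
  lab_cocycle i j k h h' := by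
    have hik : Balanced S i ∧ ∃ c, Path S i k c :=
      ⟨h.1, _, h.2.choose_spec.append h'.2.choose_spec⟩
    rw [dif_pos h, dif_pos h', dif_pos hik]
    exact h.1.2 k _ _ hik.2.choose_spec (h.2.choose_spec.append h'.2.choose_spec)

theorem lab_join (h : (join S).rel i j) (hc : Path S i j c) : (join S).lab i j = c := by
  show dite _ _ _ = c
  rw [dif_pos (show Balanced S i ∧ ∃ c, Path S i j c from h)]
  exact h.1.2 j _ _ h.2.choose_spec hc

theorem le_join {x : DowlingElt n r} (hx : x ∈ S) : x ≤ join S := by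
  refine ⟨fun i hi hb => hb.1 i 1 (Path.refl i) x hx hi, fun i j h => ?_⟩
  by_cases hb : Balanced S i
  · have hij : (join S).rel i j := ⟨hb, _, Path.single hx h⟩
    exact Or.inr ⟨hij, lab_join hij (Path.single hx h)⟩
  · exact Or.inl ⟨hb, fun hj => hb (hj.of_path (Path.single hx h).symm)⟩

theorem join_le {w : DowlingElt n r} (hw : ∀ x ∈ S, x ≤ w) : join S ≤ w := by
  have path_nonzero : ∀ {i j c}, i ∉ w.zero → Path S i j c → w.rel i j ∧ w.lab i j = c := by
    intro i j c hi h
    induction h with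
    | refl => exact ⟨w.rel_refl i hi, w.lab_refl i⟩
    | @tail j k c x _ hx hr ih =>
      obtain ⟨hij, hlab⟩ := ih
      obtain ⟨hjk, hlab'⟩ := rel_of_le (hw x hx) hr (notMem_zero_right hij)
      exact ⟨w.rel_trans i j k hij hjk, by rw [w.lab_cocycle i j k hij hjk, hlab, hlab']⟩
  have path_zero : ∀ {i j c}, i ∈ w.zero → Path S i j c → j ∈ w.zero := by
    intro i j c hi h
    induction h with
    | refl => exact hi
    | tail _ hx hr ih => exact mem_zero_of_le (hw _ hx) hr ih
  refine ⟨fun i hi => ?_, fun i j h => ?_⟩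
  · by_contra hwi
    refine hi ⟨fun j c hc x hx hj => ?_, fun j c c' hc hc' => ?_⟩
    · exact notMem_zero_right (path_nonzero hwi hc).1 ((hw x hx).1 hj)
    · rw [← (path_nonzero hwi hc).2, (path_nonzero hwi hc').2]
  · by_cases hi : i ∈ w.zero
    · exact Or.inl ⟨hi, path_zero hi h.2.choose_spec⟩
    · obtain ⟨hij, hlab⟩ := path_nonzero hi h.2.choose_spec
      exact Or.inr ⟨hij, hlab.trans (lab_join h h.2.choose_spec).symm⟩

theorem isLUB_join (S : Set (DowlingElt n r)) : IsLUB S (join S) :=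
  ⟨fun _ hx => le_join hx, fun _ hw => join_le hw⟩

end Join

end DowlingElt

end

theorem rkd_coe {n r d : ℕ} (a : {x : DowlingElt n r // DDiv d x}) :
    rkd d (a : QnRD n r d) = ((n / d : ℕ) : ℤ) + 1 - a.1.blocks.card := by
  rw [← DowlingElt.nblocks_eq_card_blocks]
  rfl

open DowlingElt

/-- The `d`-divisible Dowling lattice `Q_n(r, d)` is a pure lattice with
rank function `rk (I, π, γ) = ⌊n/d⌋ + 1 - |π|` (and `rk 0̂ = 0`): the rank function
increases by exactly one along covering relations, and any two elements have a least upper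
bound and a greatest lower bound. -/
theorem QnRD_pure_lattice (n r d : ℕ) (hd : 0 < d) :
    (∀ x y : QnRD n r d, x ⋖ y → rkd d y = rkd d x + 1) ∧
    rkd d (⊥ : QnRD n r d) = 0 ∧
    (∀ x y : QnRD n r d, ∃ z, IsLUB {x, y} z) ∧
    (∀ x y : QnRD n r d, ∃ z, IsGLB {x, y} z) := by
  refine ⟨fun x y hxy => ?_, rfl,
    WithBot.exists_isLUB_pair_subtype (isUpperSet_dDiv d) fun a b => ⟨_, isLUB_join {a, b}⟩,
    WithBot.exists_isGLB_pair_subtype (isUpperSet_dDiv d) fun s _ => ⟨_, isLUB_join s⟩⟩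
  induction y using WithBot.recBotCoe with
  | bot => exact absurd hxy.lt not_lt_bot
  | coe b =>
  induction x using WithBot.recBotCoe with
  | bot =>
    rw [rkd_coe, card_blocks_of_isMin hd (WithBot.bot_covBy_coe.1 hxy)]
    exact (add_sub_cancel_left _ _).trans (zero_add 1).symm
  | coe a =>
    rw [rkd_coe, rkd_coe, card_blocks_of_covBy (WithBot.coe_covBy_coe.1 hxy)]
    push_cast
    ring
end

section
/- The number of minimal elements of the exponential structure R'^{(d,k)}_n (equivalently, the number of atoms of Q_{dn}(r,d,k) lying below the distinguished element c_n with a single nonzero block) is M(n) = [((dn)/k)!]^k / (n! · [(d/k)!]^{kn}). -/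
/-- `k`-even colouring: identifying `μ_r` with `ℤ/r`, the colour of an element is its label
modulo `k`, detected by the `(r/k)`-th power of the label; within each nonzero block, every
colour class (measured relative to any base point `i` of the block) has the same size. -/
def EvenCol {n r : ℕ} (k : ℕ) (x : DowlingElt n r) : Prop :=
  ∀ i, i ∉ x.zero → ∀ ξ ζ : ℂ, ξ ^ k = 1 → ζ ^ k = 1 →
    Nat.card {j : Fin n // x.rel i j ∧ x.lab i j ^ (r / k) = ξ} =
      Nat.card {j : Fin n // x.rel i j ∧ x.lab i j ^ (r / k) = ζ}

/-- The distinguished element `c_n` of `Q_N(r, d, k)` (for `N = dn`): empty zero block, a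
single nonzero block `{1, ..., N}`, with labelling `γ(i) = ⌊(i-1)k/N⌋ + 1` (labels taken in
`ℤ/r`, realized in `μ_r` via the `r`-th root of unity `ω`). -/
noncomputable def cElt (N r k : ℕ) (ω : ℂ) (hω : ω ^ r = 1) (hω0 : ω ≠ 0) :
    DowlingElt N r where
  zero := ∅
  rel _ _ := True
  lab i j := ω ^ ((j.1 * k) / N + 1) * (ω ^ ((i.1 * k) / N + 1))⁻¹
  rel_compl i j _ := ⟨Set.notMem_empty i, Set.notMem_empty j⟩
  rel_refl _ _ := trivial
  rel_symm _ _ _ := trivial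
  rel_trans _ _ _ _ _ := trivial
  lab_root i j := by
    have key : ∀ a : ℕ, (ω ^ a) ^ r = 1 := fun a => by
      rw [← pow_mul, mul_comm, pow_mul, hω, one_pow]
    rw [mul_pow, inv_pow, key, key, inv_one, one_mul]
  lab_one i j h := absurd trivial h
  lab_refl i := mul_inv_cancel₀ (pow_ne_zero _ hω0)
  lab_symm i j _ := by
    field_simp
  lab_cocycle i j k' _ _ := by
    field_simp

/-!
An atom below `c_n` has empty zero block and inherits its labels from `c_n`, so it is just a
partition of `{1, …, dn}`. Reading the `k`-even colouring through the primitive root `ω`, the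
conditions say that every block contains equally many elements of each of the `k` colour classes,
a multiple of `d/k`. Minimality forces exactly `e = d/k` of each colour, since a block with
`s e` elements of each colour can be cut into `s` such blocks. Labelling the `n` blocks by
`Fin n` gives `n!` functions per atom, and these functions are counted colour by colour: on a
colour class of size `n e`, the functions with all fibres of size `e` form one orbit of the
symmetric group, with stabiliser `(e!)^n` (orbit–stabiliser).
-/

open Function

def FiberCardEq {X Y : Type*} (e : ℕ) (f : X → Y) : Prop :=
  ∀ y, Nat.card {x // f x = y} = e

theorem FiberCardEq.comp_equiv {X Y : Type*} {e : ℕ} {f : X → Y} (hf : FiberCardEq e f)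
    (σ : Y ≃ Y) : FiberCardEq e (σ ∘ f) := fun _ =>
  (Nat.card_congr (Equiv.subtypeEquivRight fun _ => σ.eq_symm_apply.symm)).trans (hf _)

theorem Nat.card_subtype_fst_eq {Y Z : Type*} (y : Y) :
    Nat.card {p : Y × Z // p.1 = y} = Nat.card Z := by
  simp [Nat.card_congr (Equiv.prodSubtypeFstEquivSubtypeProd (p := (· = y)))]

theorem Nat.card_eq_mul_of_card_fiber {α β : Type*} [Finite α] [Finite β] (Φ : α → β) {c : ℕ}
    (h : ∀ b, Nat.card {a // Φ a = b} = c) : Nat.card α = Nat.card β * c := by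
  have := Fintype.ofFinite β
  rw [← Nat.card_congr (Equiv.sigmaFiberEquiv Φ), Nat.card_sigma,
    Finset.sum_congr rfl fun b _ => h b, Finset.sum_const, Finset.card_univ, smul_eq_mul,
    Nat.card_eq_fintype_card]

theorem exists_fiberCardEq {X Y : Type*} [Finite X] [Finite Y] {e : ℕ}
    (h : Nat.card X = Nat.card Y * e) : ∃ g : X → Y, FiberCardEq e g := by
  obtain ⟨φ⟩ : Nonempty (X ≃ Y × Fin e) := Finite.card_eq.1 (by simpa using h)
  refine ⟨Prod.fst ∘ φ, fun y => ?_⟩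
  change Nat.card {x // (φ x).1 = y} = e
  rw [Nat.card_congr (φ.subtypeEquiv (q := fun p => p.1 = y) fun _ => Iff.rfl),
    Nat.card_subtype_fst_eq, Nat.card_fin]

theorem exists_perm_comp_eq_of_ker_eq {α β : Type*} [Finite β] {f g : α → β}
    (hf : Surjective f) (h : ∀ a b, g a = g b ↔ f a = f b) :
    ∃ σ : Equiv.Perm β, ⇑σ ∘ f = g := by
  have hσ (a : α) : g (surjInv hf (f a)) = g a := (h _ _).2 (surjInv_eq hf (f a))
  have hinj : Injective (g ∘ surjInv hf) := fun b b' hb => by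
    rw [← surjInv_eq hf b, ← surjInv_eq hf b']
    exact (h _ _).1 hb
  exact ⟨Equiv.ofBijective _ (Finite.injective_iff_bijective.1 hinj), funext hσ⟩

theorem exists_chunking {α K : Type*} [Finite α] (κ : α → K) {e : ℕ}
    (h : ∀ z, e ∣ Nat.card {a // κ a = z}) :
    ∃ g : α → ℕ, (∀ a, g a < Nat.card {a' // κ a' = κ a} / e) ∧
      ∀ z, ∀ t < Nat.card {a // κ a = z} / e, Nat.card {a // κ a = z ∧ g a = t} = e := by
  choose H hH using fun z => exists_fiberCardEq (X := {a // κ a = z})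
    (Y := Fin (Nat.card {a // κ a = z} / e)) (by rw [Nat.card_fin, Nat.div_mul_cancel (h z)])
  have hg (z : K) (a : {a // κ a = z}) : (H (κ a) ⟨a, rfl⟩ : ℕ) = H z a := by
    obtain ⟨a, rfl⟩ := a; rfl
  refine ⟨fun a => H (κ a) ⟨a, rfl⟩, fun a => (H _ _).isLt, fun z t ht => ?_⟩
  refine (Nat.card_congr ((Equiv.subtypeSubtypeEquivSubtypeInter (κ · = z) _).symm.trans
    (Equiv.subtypeEquivRight fun a => ?_))).trans (hH z ⟨t, ht⟩)
  rw [Fin.ext_iff, ← hg z a]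

theorem mem_orbit_domMulAct_iff {X Y : Type*} [Finite X] {f g : X → Y} :
    g ∈ MulAction.orbit (Equiv.Perm X)ᵈᵐᵃ f ↔
      ∀ y, Nat.card {x // g x = y} = Nat.card {x // f x = y} := by
  constructor
  · rintro ⟨π, rfl⟩ y
    exact Nat.card_congr ((DomMulAct.mk.symm π).subtypeEquiv fun _ => Iff.rfl)
  · intro h
    let π := Equiv.ofFiberEquiv fun y => (Finite.card_eq.1 (h y)).some
    exact ⟨DomMulAct.mk π, funext fun x => Equiv.ofFiberEquiv_map _ x⟩

theorem card_fiberCardEq_mul {X Y : Type*} [Finite X] [Finite Y] {e : ℕ}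
    (h : Nat.card X = Nat.card Y * e) :
    Nat.card {g : X → Y // FiberCardEq e g} * e.factorial ^ Nat.card Y =
      (Nat.card X).factorial := by
  classical
  have := Fintype.ofFinite X
  have := Fintype.ofFinite Y
  obtain ⟨g₀, hg₀⟩ := exists_fiberCardEq h
  have horbit : MulAction.orbit (Equiv.Perm X)ᵈᵐᵃ g₀ = {g | FiberCardEq e g} := by
    ext g
    simp only [mem_orbit_domMulAct_iff, Set.mem_ofPred_eq, FiberCardEq]
    exact forall_congr' fun y => by rw [hg₀ y]
  have hstab : Nat.card (MulAction.stabilizer (Equiv.Perm X)ᵈᵐᵃ g₀) =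
      e.factorial ^ Nat.card Y := by
    rw [Nat.card_congr (DomMulAct.mk.symm.subtypeEquiv (q := fun π : Equiv.Perm X => g₀ ∘ π = g₀)
      fun _ => DomMulAct.mem_stabilizer_iff), Nat.card_eq_fintype_card,
      DomMulAct.stabilizer_card]
    simp [← Nat.card_eq_fintype_card, hg₀ _]
  rw [← Set.coe_ofPred, ← horbit, Nat.card_coe_set_eq, ← MulAction.index_stabilizer, mul_comm,
    ← hstab, Subgroup.card_mul_index, Nat.card_congr DomMulAct.mk.symm, Nat.card_perm]

theorem card_fiberCardEq_prod_mul {X Y Γ : Type*} [Finite X] [Finite Y] [Fintype Γ] {e : ℕ}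
    (col : X → Γ) (hcol : ∀ c, Nat.card {x // col x = c} = Nat.card Y * e) :
    Nat.card {f : X → Y // FiberCardEq e fun x => (f x, col x)} *
        e.factorial ^ (Nat.card Y * Nat.card Γ) =
      (Nat.card Y * e).factorial ^ Nat.card Γ := by
  let restrict : (X → Y) ≃ ∀ c, {x // col x = c} → Y :=
    ((Equiv.sigmaFiberEquiv col).symm.arrowCongr (Equiv.refl Y)).trans
      (Equiv.piCurry fun _ _ => Y)
  have hfiber (f : X → Y) (y : Y) (c : Γ) : Nat.card {x // (f x, col x) = (y, c)} =
      Nat.card {x : {x // col x = c} // restrict f c x = y} :=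
    Nat.card_congr ((Equiv.subtypeEquivRight fun x => by simp [and_comm]).trans
      (Equiv.subtypeSubtypeEquivSubtypeInter (col · = c) (f · = y)).symm)
  have hsplit : {f : X → Y // FiberCardEq e fun x => (f x, col x)} ≃
      ∀ c, {g : {x // col x = c} → Y // FiberCardEq e g} :=
    (restrict.subtypeEquiv fun f => by
      simp only [FiberCardEq, Prod.forall, hfiber]
      exact forall_comm).trans Equiv.subtypePiEquivPi
  calc Nat.card {f : X → Y // FiberCardEq e fun x => (f x, col x)} *
        e.factorial ^ (Nat.card Y * Nat.card Γ)
      = ∏ c, Nat.card {g : {x // col x = c} → Y // FiberCardEq e g} *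
          e.factorial ^ Nat.card Y := by
        rw [Nat.card_congr hsplit, Nat.card_pi, Finset.prod_mul_distrib, Finset.prod_const,
          Finset.card_univ, ← Nat.card_eq_fintype_card, pow_mul]
    _ = ∏ _c : Γ, (Nat.card Y * e).factorial :=
        Finset.prod_congr rfl fun c _ => by rw [card_fiberCardEq_mul (hcol c), hcol c]
    _ = (Nat.card Y * e).factorial ^ Nat.card Γ := by
        rw [Finset.prod_const, Finset.card_univ, Nat.card_eq_fintype_card (α := Γ)]

/-- The label of `j` in `c_n` is `ω ^ (colour j + 1)`. -/
def colour (N k : ℕ) [NeZero k] (j : Fin N) : Fin k :=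
  ⟨j * k / N, Nat.div_lt_of_lt_mul (Nat.mul_lt_mul_of_pos_right j.2 (NeZero.pos k))⟩

theorem card_colour_eq {N k m : ℕ} [NeZero k] (hN : N = k * m) (c : Fin k) :
    Nat.card {j : Fin N // colour N k j = c} = m := by
  subst hN
  have hcol (j : Fin (k * m)) : colour (k * m) k j = (finProdFinEquiv.symm j).1 := by
    ext
    simp [colour, mul_comm k m, Nat.mul_div_mul_right _ _ (NeZero.pos k)]
  have hequiv : {j // colour (k * m) k j = c} ≃ {p : Fin k × Fin m // p.1 = c} :=
    finProdFinEquiv.symm.subtypeEquiv fun j => by rw [hcol]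
  rw [Nat.card_congr hequiv, Nat.card_subtype_fst_eq, Nat.card_fin]

namespace DowlingElt

variable {N r : ℕ}

theorem ext {x y : DowlingElt N r} (hzero : x.zero = y.zero) (hrel : x.rel = y.rel)
    (hlab : x.lab = y.lab) : x = y := by
  cases x; cases y; subst hzero hrel hlab; rfl

theorem rel_eq_rel_iff (x : DowlingElt N r) {i j : Fin N} (hj : j ∉ x.zero) :
    x.rel i = x.rel j ↔ x.rel i j := by
  refine ⟨fun h => h ▸ x.rel_refl j hj, fun h => funext fun l => propext ?_⟩
  exact ⟨x.rel_trans j i l (x.rel_symm i j h), x.rel_trans i j l h⟩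

def refine {β : Type*} [DecidableEq β] (x : DowlingElt N r) (f : Fin N → β) :
    DowlingElt N r where
  zero := x.zero
  rel a b := x.rel a b ∧ f a = f b
  lab a b := if f a = f b then x.lab a b else 1
  rel_compl a b h := x.rel_compl a b h.1
  rel_refl a ha := ⟨x.rel_refl a ha, rfl⟩
  rel_symm a b h := ⟨x.rel_symm a b h.1, h.2.symm⟩
  rel_trans a b c h h' := ⟨x.rel_trans a b c h.1 h'.1, h.2.trans h'.2⟩
  lab_root a b := by split_ifs <;> simp [x.lab_root]
  lab_one a b h := by
    split_ifs with hf
    · exact x.lab_one a b fun hr => h ⟨hr, hf⟩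
    · rfl
  lab_refl a := by simp [x.lab_refl]
  lab_symm a b h := by simp [h.2, x.lab_symm a b h.1]
  lab_cocycle a b c h h' := by simp [h.2, h'.2, x.lab_cocycle a b c h.1 h'.1]

theorem refine_le {β : Type*} [DecidableEq β] (x : DowlingElt N r) (f : Fin N → β) :
    x.refine f ≤ x :=
  ⟨subset_rfl, fun _ _ h => Or.inr ⟨h.1, (if_pos h.2).symm⟩⟩

variable {k : ℕ} {ω : ℂ} {hω : ω ^ r = 1} {hω0 : ω ≠ 0} {x y : DowlingElt N r}

theorem zero_eq_empty_of_le_cElt (hx : x ≤ cElt N r k ω hω hω0) : x.zero = ∅ :=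
  Set.subset_empty_iff.1 hx.1

variable [NeZero k]

noncomputable def colourCard (x : DowlingElt N r) (i : Fin N) (c : Fin k) : ℕ :=
  Nat.card {j // x.rel i j ∧ colour N k j = c}

theorem card_rel_eq_mul (x : DowlingElt N r) (i : Fin N) {t : ℕ}
    (h : ∀ c : Fin k, x.colourCard i c = t) : Nat.card {j // x.rel i j} = k * t := by
  rw [← Nat.card_congr (Equiv.sigmaFiberEquiv fun j : {j // x.rel i j} => colour N k j),
    Nat.card_sigma, Finset.sum_congr rfl fun c _ => (Nat.card_congr
      (Equiv.subtypeSubtypeEquivSubtypeInter (x.rel i) (colour N k · = c))).trans (h c)]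
  simp

theorem lab_eq_of_le_cElt (hx : x ≤ cElt N r k ω hω hω0) {i j : Fin N} (h : x.rel i j) :
    x.lab i j = ω ^ ((colour N k j : ℕ) + 1) * (ω ^ ((colour N k i : ℕ) + 1))⁻¹ := by
  rcases hx.2 i j h with ⟨hi, -⟩ | ⟨-, hlab⟩
  · exact absurd hi (Set.notMem_empty i)
  · exact hlab.symm

theorem eq_of_le_cElt (hx : x ≤ cElt N r k ω hω hω0) (hy : y ≤ cElt N r k ω hω hω0)
    (h : ∀ a b, x.rel a b ↔ y.rel a b) : x = y := by
  refine ext (by rw [zero_eq_empty_of_le_cElt hx, zero_eq_empty_of_le_cElt hy])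
    (funext₂ fun a b => propext (h a b)) (funext₂ fun a b => ?_)
  by_cases hab : x.rel a b
  · rw [lab_eq_of_le_cElt hx hab, lab_eq_of_le_cElt hy ((h a b).1 hab)]
  · rw [x.lab_one a b hab, y.lab_one a b (mt (h a b).2 hab)]

theorem refine_cElt_eq_iff {β : Type*} [DecidableEq β] {f g : Fin N → β} :
    (cElt N r k ω hω hω0).refine f = (cElt N r k ω hω hω0).refine g ↔
      ∀ a b, f a = f b ↔ g a = g b := by
  refine ⟨fun h a b => ?_, fun h => eq_of_le_cElt (refine_le _ f) (refine_le _ g) fun a b => ?_⟩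
  · simpa [refine, cElt] using congrFun₂ (congrArg rel h) a b
  · simpa [refine, cElt] using h a b

theorem lab_pow_eq_iff (hprim : IsPrimitiveRoot ω r) (hr : 0 < r) (hkr : k ∣ r)
    (hx : x ≤ cElt N r k ω hω hω0) {i j : Fin N} (h : x.rel i j) (t : Fin k) :
    x.lab i j ^ (r / k) = (ω ^ (r / k)) ^ (t : ℕ) ↔ colour N k j = t + colour N k i := by
  set η := ω ^ (r / k)
  have hη : IsPrimitiveRoot η k := hprim.pow hr (Nat.div_mul_cancel hkr).symm
  have hpow (a : ℕ) : (ω ^ a) ^ (r / k) = η ^ a := by rw [← pow_mul, mul_comm, pow_mul]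
  rw [lab_eq_of_le_cElt hx h, mul_pow, inv_pow, hpow, hpow,
    mul_inv_eq_iff_eq_mul₀ (pow_ne_zero _ (pow_ne_zero _ hω0)), ← pow_add,
    (hη.isOfFinOrder (NeZero.ne k)).pow_eq_pow_iff_modEq, ← hη.eq_orderOf, ← add_assoc,
    Fin.ext_iff, Fin.val_add]
  refine ⟨fun h => ?_, fun h => Nat.ModEq.add_right 1 ?_⟩
  · rw [← Nat.mod_eq_of_lt (colour N k j).isLt]
    exact Nat.ModEq.add_right_cancel' 1 h
  · rw [Nat.ModEq, h, Nat.mod_mod]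

theorem evenCol_iff_of_le_cElt (hprim : IsPrimitiveRoot ω r) (hr : 0 < r) (hkr : k ∣ r)
    (hx : x ≤ cElt N r k ω hω hω0) :
    EvenCol k x ↔ ∀ i (c c' : Fin k), x.colourCard i c = x.colourCard i c' := by
  set η := ω ^ (r / k)
  have hη : IsPrimitiveRoot η k := hprim.pow hr (Nat.div_mul_cancel hkr).symm
  have hcount (i : Fin N) (t : Fin k) :
      Nat.card {j // x.rel i j ∧ x.lab i j ^ (r / k) = η ^ (t : ℕ)} =
        x.colourCard i (t + colour N k i) :=
    Nat.card_congr (Equiv.subtypeEquivRight fun j =>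
      and_congr_right fun h => lab_pow_eq_iff hprim hr hkr hx h t)
  have hroot (t : Fin k) : (η ^ (t : ℕ)) ^ k = 1 := by
    rw [← pow_mul, mul_comm, pow_mul, hη.pow_eq_one, one_pow]
  refine ⟨fun h i c c' => ?_, fun h i _ ξ ζ hξ hζ => ?_⟩
  · have := h i (by simp [zero_eq_empty_of_le_cElt hx]) _ _
      (hroot (c - colour N k i)) (hroot (c' - colour N k i))
    rwa [hcount, hcount, sub_add_cancel, sub_add_cancel] at this
  · obtain ⟨t, ht, rfl⟩ := hη.eq_pow_of_pow_eq_one hξ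
    obtain ⟨t', ht', rfl⟩ := hη.eq_pow_of_pow_eq_one hζ
    exact (hcount i ⟨t, ht⟩).trans ((h i _ _).trans (hcount i ⟨t', ht'⟩).symm)

theorem dDiv_and_evenCol_iff (hprim : IsPrimitiveRoot ω r) (hr : 0 < r) (hkr : k ∣ r)
    (hx : x ≤ cElt N r k ω hω hω0) (e : ℕ) :
    DDiv (k * e) x ∧ EvenCol k x ↔ ∀ i, ∃ s, ∀ c : Fin k, x.colourCard i c = s * e := by
  rw [evenCol_iff_of_le_cElt hprim hr hkr hx]
  refine ⟨fun ⟨hD, hE⟩ i => ?_, fun h => ⟨fun i _ => ?_, fun i c c' => ?_⟩⟩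
  · have hblock := x.card_rel_eq_mul i fun c => hE i c 0
    obtain ⟨s, hs⟩ := Nat.dvd_of_mul_dvd_mul_left (NeZero.pos k)
      (hblock ▸ hD i (by simp [zero_eq_empty_of_le_cElt hx]))
    exact ⟨s, fun c => by rw [hE i c 0, hs, mul_comm]⟩
  · obtain ⟨s, hs⟩ := h i
    rw [x.card_rel_eq_mul i hs]
    exact Dvd.intro s (by ring)
  · obtain ⟨s, hs⟩ := h i
    rw [hs, hs]

theorem le_of_colourCard_eq {e : ℕ} (hx : x ≤ cElt N r k ω hω hω0)
    (hfine : ∀ i (c : Fin k), x.colourCard i c = e) (hyD : DDiv (k * e) y) (hyx : y ≤ x) :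
    x ≤ y := by
  have hx0 := zero_eq_empty_of_le_cElt hx
  have hy0 : y.zero = ∅ := Set.subset_empty_iff.1 (hx0 ▸ hyx.1)
  have hyx_rel (i j : Fin N) (h : y.rel i j) : x.rel i j ∧ x.lab i j = y.lab i j := by
    rcases hyx.2 i j h with ⟨hi, -⟩ | hrel
    · simp [hx0] at hi
    · exact hrel
  -- a block of `y` lies in a block of `x` of size `k e`, and has positive size divisible by `k e`
  have hblock (i : Fin N) : {j | y.rel i j} = {j | x.rel i j} := by
    refine Set.eq_of_subset_of_ncard_le (fun j h => (hyx_rel i j h).1) ?_ (Set.toFinite _)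
    have hxcard := x.card_rel_eq_mul i (hfine i)
    have hpos : 0 < Nat.card {j // y.rel i j} :=
      Nat.card_pos_iff.2 ⟨⟨i, y.rel_refl i (by simp [hy0])⟩, inferInstance⟩
    rw [← Nat.card_coe_set_eq, ← Nat.card_coe_set_eq]
    exact hxcard ▸ Nat.le_of_dvd hpos (hyD i (by simp [hy0]))
  refine ⟨by simp [hx0], fun i j h => Or.inr ?_⟩
  have hy : y.rel i j := (Set.ext_iff.1 (hblock i) j).2 h
  exact ⟨hy, (hyx_rel i j hy).2.symm⟩

theorem exists_refine_colourCard_eq {e : ℕ} (hx : x ≤ cElt N r k ω hω hω0)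
    (h : ∀ i, ∃ s, ∀ c : Fin k, x.colourCard i c = s * e) :
    ∃ g : Fin N → ℕ, ∀ i (c : Fin k), (x.refine g).colourCard i c = e := by
  let κ (j : Fin N) : (Fin N → Prop) × Fin k := (x.rel j, colour N k j)
  have hκ (i j : Fin N) (c : Fin k) : κ j = (x.rel i, c) ↔ x.rel i j ∧ colour N k j = c := by
    rw [Prod.mk.injEq, x.rel_eq_rel_iff (by simp [zero_eq_empty_of_le_cElt hx])]
    exact and_congr_left' ⟨x.rel_symm j i, x.rel_symm i j⟩
  have hfiber (i : Fin N) (c : Fin k) : Nat.card {j // κ j = (x.rel i, c)} = x.colourCard i c :=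
    Nat.card_congr (Equiv.subtypeEquivRight fun j => hκ i j c)
  have hdvd (z : (Fin N → Prop) × Fin k) : e ∣ Nat.card {j // κ j = z} := by
    by_cases hz : ∃ j, κ j = z
    · obtain ⟨j, rfl⟩ := hz
      obtain ⟨s, hs⟩ := h j
      exact ⟨s, by rw [hfiber, hs, mul_comm]⟩
    · have : IsEmpty {j // κ j = z} := ⟨fun j => hz ⟨j.1, j.2⟩⟩
      simp
  obtain ⟨g, hg_lt, hg_card⟩ := exists_chunking κ hdvd
  refine ⟨g, fun i c => ?_⟩
  obtain ⟨s, hs⟩ := h i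
  -- every colour class of the block of `i` has `s e` elements, so chunk `g i` exists in each
  have hlt : g i < Nat.card {j // κ j = (x.rel i, c)} / e := by
    have := hg_lt i
    rwa [show κ i = (x.rel i, colour N k i) from rfl, hfiber, hs, ← hs c, ← hfiber] at this
  refine (Nat.card_congr (Equiv.subtypeEquivRight fun j => ?_)).trans (hg_card _ _ hlt)
  change (x.rel i j ∧ g i = g j) ∧ colour N k j = c ↔ _
  rw [hκ, eq_comm (a := g i)]
  tauto

theorem minimal_iff_colourCard_eq (hprim : IsPrimitiveRoot ω r) (hr : 0 < r) (hkr : k ∣ r)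
    {e : ℕ} (x : DowlingElt N r) :
    (DDiv (k * e) x ∧ EvenCol k x ∧ x ≤ cElt N r k ω hω hω0 ∧
        ∀ y : DowlingElt N r, DDiv (k * e) y → EvenCol k y → y ≤ x → x ≤ y) ↔
      x ≤ cElt N r k ω hω hω0 ∧ ∀ i (c : Fin k), x.colourCard i c = e := by
  have hmem (y : DowlingElt N r) (hy : y ≤ cElt N r k ω hω hω0)
      (hfine : ∀ i (c : Fin k), y.colourCard i c = e) : DDiv (k * e) y ∧ EvenCol k y :=
    (dDiv_and_evenCol_iff hprim hr hkr hy e).2 fun i => ⟨1, fun c => by rw [hfine, one_mul]⟩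
  refine ⟨fun ⟨hD, hE, hx, hmin⟩ => ⟨hx, ?_⟩, fun ⟨hx, hfine⟩ => ?_⟩
  · obtain ⟨g, hg⟩ :=
      exists_refine_colourCard_eq hx ((dDiv_and_evenCol_iff hprim hr hkr hx e).1 ⟨hD, hE⟩)
    obtain ⟨hgD, hgE⟩ := hmem _ ((refine_le x g).trans hx) hg
    have hxg := hmin _ hgD hgE (refine_le x g)
    refine fun i c => (Nat.card_congr (Equiv.subtypeEquivRight fun j =>
      and_congr_left' ⟨fun h => ?_, fun h => h.1⟩)).trans (hg i c)
    rcases hxg.2 i j h with ⟨hi, -⟩ | ⟨h', -⟩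
    · simp [refine, zero_eq_empty_of_le_cElt hx] at hi
    · exact h'
  · obtain ⟨hD, hE⟩ := hmem x hx hfine
    exact ⟨hD, hE, hx, fun y hyD _ hyx => le_of_colourCard_eq hx hfine hyD hyx⟩

theorem colourCard_refine_cElt {n e : ℕ} {f : Fin N → Fin n}
    (hf : FiberCardEq e fun j => (f j, colour N k j)) (i : Fin N) (c : Fin k) :
    ((cElt N r k ω hω hω0).refine f).colourCard i c = e :=
  (Nat.card_congr (Equiv.subtypeEquivRight fun j => by
    simp [refine, cElt, eq_comm (a := f i)])).trans (hf (f i, c))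

theorem exists_eq_refine_cElt {n e : ℕ} (he : 0 < e) (hN : N = k * e * n)
    (hx : x ≤ cElt N r k ω hω hω0) (hfine : ∀ i (c : Fin k), x.colourCard i c = e) :
    ∃ f : Fin N → Fin n, (FiberCardEq e fun j => (f j, colour N k j)) ∧
      (cElt N r k ω hω hω0).refine f = x := by
  have hnotMem (i : Fin N) : i ∉ x.zero := by simp [zero_eq_empty_of_le_cElt hx]
  have hrel (i j : Fin N) : x.rel j = x.rel i ↔ x.rel i j :=
    (x.rel_eq_rel_iff (hnotMem i)).trans ⟨x.rel_symm j i, x.rel_symm i j⟩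
  have hblock (i : Fin N) : Nat.card {j // x.rel j = x.rel i} = k * e :=
    (Nat.card_congr (Equiv.subtypeEquivRight fun j => hrel i j)).trans
      (x.card_rel_eq_mul i (hfine i))
  have hrange : Nat.card (Set.range x.rel) = n := by
    have := Nat.card_eq_mul_of_card_fiber (Set.rangeFactorization x.rel) (c := k * e) (by
      rintro ⟨_, i, rfl⟩
      rw [← hblock i]
      exact Nat.card_congr (Equiv.subtypeEquivRight fun j => Subtype.ext_iff))
    rw [Nat.card_fin] at this
    exact Nat.eq_of_mul_eq_mul_right (Nat.mul_pos (NeZero.pos k) he)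
      (this.symm.trans (hN.trans (by ring)))
  let φ := Finite.equivFinOfCardEq hrange
  let f := φ ∘ Set.rangeFactorization x.rel
  have hf (i j : Fin N) : f i = f j ↔ x.rel i j :=
    φ.injective.eq_iff.trans (Subtype.ext_iff.trans (x.rel_eq_rel_iff (hnotMem j)))
  refine ⟨f, fun ⟨b, c⟩ => ?_, eq_of_le_cElt (refine_le _ _) hx fun a b => ?_⟩
  · obtain ⟨i, rfl⟩ := φ.surjective.comp Set.rangeFactorization_surjective b
    rw [← hfine i c]
    exact Nat.card_congr (Equiv.subtypeEquivRight fun j => by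
      rw [Prod.mk.injEq, eq_comm (a := f j), hf])
  · exact (and_iff_right trivial).trans (hf a b)

theorem card_fiberCardEq_colour_eq_mul {n e : ℕ} (he : 0 < e) (hN : N = k * e * n) :
    Nat.card {f : Fin N → Fin n // FiberCardEq e fun j => (f j, colour N k j)} =
      Nat.card {x : DowlingElt N r //
        x ≤ cElt N r k ω hω hω0 ∧ ∀ i (c : Fin k), x.colourCard i c = e} * n.factorial := by
  let Φ (f : {f : Fin N → Fin n // FiberCardEq e fun j => (f j, colour N k j)}) :
      {x : DowlingElt N r // x ≤ cElt N r k ω hω hω0 ∧ ∀ i (c : Fin k), x.colourCard i c = e} :=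
    ⟨(cElt N r k ω hω hω0).refine f.1, refine_le _ _, colourCard_refine_cElt f.2⟩
  have hΦ : Surjective Φ := by
    rintro ⟨x, hx, hfine⟩
    obtain ⟨f, hf, rfl⟩ := exists_eq_refine_cElt he hN hx hfine
    exact ⟨⟨f, hf⟩, rfl⟩
  have := Finite.of_surjective Φ hΦ
  refine Nat.card_eq_mul_of_card_fiber Φ fun z => ?_
  obtain ⟨⟨f₀, hf₀⟩, rfl⟩ := hΦ z
  have hsurj : Surjective f₀ := fun b => by
    have : Nonempty {j // (f₀ j, colour N k j) = (b, 0)} :=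
      (Nat.card_pos_iff.1 (by rw [hf₀ (b, 0)]; exact he)).1
    obtain ⟨j, hj⟩ := this
    exact ⟨j, congrArg Prod.fst hj⟩
  let Ψ (σ : Equiv.Perm (Fin n)) : {f // Φ f = Φ ⟨f₀, hf₀⟩} :=
    ⟨⟨σ ∘ f₀, hf₀.comp_equiv (σ.prodCongr (Equiv.refl _))⟩,
      Subtype.ext (refine_cElt_eq_iff.2 fun a b => σ.injective.eq_iff)⟩
  have hΨ : Bijective Ψ := by
    refine ⟨fun σ τ h => DFunLike.coe_injective (hsurj.injective_comp_right ?_), ?_⟩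
    · exact congrArg (fun f => f.1.1) h
    · rintro ⟨⟨f, hf⟩, hΦf⟩
      obtain ⟨σ, hσ⟩ :=
        exists_perm_comp_eq_of_ker_eq hsurj (refine_cElt_eq_iff.1 (congrArg Subtype.val hΦf))
      exact ⟨σ, Subtype.ext (Subtype.ext hσ)⟩
  rw [← Nat.card_eq_of_bijective Ψ hΨ, Nat.card_perm, Nat.card_fin]

end DowlingElt

theorem card_atoms_below_cn_general (d n k r : ℕ) (hd : 0 < d) (hr : 0 < r)
    (hkd : k ∣ d) (hkr : k ∣ r)
    (ω : ℂ) (hprim : IsPrimitiveRoot ω r) (hω : ω ^ r = 1) (hω0 : ω ≠ 0) :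
    Nat.card {x : DowlingElt (d * n) r //
        DDiv d x ∧ EvenCol k x ∧ x ≤ cElt (d * n) r k ω hω hω0 ∧
        ∀ y : DowlingElt (d * n) r, DDiv d y → EvenCol k y → y ≤ x → x ≤ y} =
      ((d * n / k).factorial) ^ k /
        (n.factorial * ((d / k).factorial) ^ (k * n)) := by
  obtain ⟨e, rfl⟩ := hkd
  have hk : 0 < k := Nat.pos_of_mul_pos_right hd
  have he : 0 < e := Nat.pos_of_mul_pos_left hd
  have : NeZero k := ⟨hk.ne'⟩
  have hcount := card_fiberCardEq_prod_mul (Y := Fin n) (e := e) (colour (k * e * n) k)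
    fun c => by rw [card_colour_eq (m := n * e) (by ring), Nat.card_fin]
  rw [DowlingElt.card_fiberCardEq_colour_eq_mul (r := r) (hω := hω) (hω0 := hω0) he rfl,
    Nat.card_fin, Nat.card_fin] at hcount
  rw [Nat.card_congr
      (Equiv.subtypeEquivRight (DowlingElt.minimal_iff_colourCard_eq hprim hr hkr)),
    show k * e * n / k = n * e by rw [mul_assoc, Nat.mul_div_cancel_left _ hk, mul_comm],
    Nat.mul_div_cancel_left _ hk]
  refine (Nat.div_eq_of_eq_mul_left (by positivity) ?_).symm
  rw [← hcount]
  ring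

/-- The number of minimal elements of the exponential structure
`R'^{(d,k)}_n` — equivalently, the number of atoms of the `k`-evenly coloured `d`-divisible
Dowling lattice `Q_{dn}(r, d, k)` lying below the distinguished one-block element `c_n` —
is `M(n) = ((dn/k)!)^k / (n! ((d/k)!)^{kn})`. -/
theorem card_atoms_below_cn (d n k r : ℕ) (hd : 0 < d) (hk : 0 < k) (hr : 0 < r)
    (hkd : k ∣ d) (hkr : k ∣ r)
    (ω : ℂ) (hprim : IsPrimitiveRoot ω r) (hω : ω ^ r = 1) (hω0 : ω ≠ 0) :
    Nat.card {x : DowlingElt (d * n) r //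
        DDiv d x ∧ EvenCol k x ∧ x ≤ cElt (d * n) r k ω hω hω0 ∧
        ∀ y : DowlingElt (d * n) r, DDiv d y → EvenCol k y → y ≤ x → x ≤ y} =
      ((d * n / k).factorial) ^ k /
        (n.factorial * ((d / k).factorial) ^ (k * n)) :=
  card_atoms_below_cn_general d n k r hd hr hkd hkr ω hprim hω hω0
end
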